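/- arXiv:2508.14103 — 4 statements merged into one kernel-verified Lean document; each statement's English description precedes it below -/
import Mathlib

section
/- Let Σ be an acyclic partial matching on a finite simplicial complex K compatible with a cosheaf C (i.e., C_{τ▷σ} is an isomorphism for each matched pair σ◁τ). Then the Morse boundary maps, given blockwise between critical simplices α ∈ K_k and ω ∈ K_{k−1} by [α:ω]_Σ := [α:ω]·C_{α▷ω} + Σ_ρ [τ:ω]·C_{τ▷ω} ∘ ω_ρ ∘ C_{α▷σ}·[α:σ] (sum over Σ-paths ρ from a facet σ of α to τ with ω a facet of τ), satisfy ∂^Σ_k ∘ ∂^Σ_{k+1} = 0, so the Morse complex C^Σ_•(K;C) = ⊕_{α critical} C_α is a chain complex. -/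
open Classical DirectSum

noncomputable section

/-- A finite (abstract) simplicial complex on a linearly ordered vertex type `V`:
a downward-closed finite collection of nonempty finite vertex sets. -/
structure SimpComplex (V : Type) [LinearOrder V] where
  simplices : Finset (Finset V)
  nonempty_mem : ∀ s ∈ simplices, s.Nonempty
  down_closed : ∀ s ∈ simplices, ∀ t : Finset V, t.Nonempty → t ⊆ s → t ∈ simplices

variable {V : Type} [Fintype V] [LinearOrder V]

/-- The incidence symbol `[σ:τ]`: `(-1)^i` if `τ` is the `i`-th face of `σ`
(i.e. obtained by deleting the `i`-th vertex of `σ` in the linear order), and `0` otherwise. -/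
def incidence (F : Type) [Field F] (σ τ : Finset V) : F :=
  if τ ⊆ σ ∧ σ.card = τ.card + 1 then
    ∑ v ∈ σ \ τ, (-1 : F) ^ (σ.filter (fun w => w < v)).card
  else 0

/-- A cosheaf of finite-dimensional `F`-vector spaces on the poset of finite
subsets of `V` (in particular on any simplicial complex with vertices in `V`):
costalks together with extension maps, functorially. -/
structure Cosheaf (F : Type) [Field F] (V : Type) [LinearOrder V] where
  stalk : Finset V → Type
  [instAdd : ∀ σ, AddCommGroup (stalk σ)]
  [instMod : ∀ σ, Module F (stalk σ)]
  [instFD : ∀ σ, FiniteDimensional F (stalk σ)]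
  ext : ∀ σ τ : Finset V, τ ⊆ σ → (stalk σ →ₗ[F] stalk τ)
  ext_id : ∀ σ, ext σ σ (subset_refl σ) = LinearMap.id
  ext_comp : ∀ σ τ υ (h1 : τ ⊆ σ) (h2 : υ ⊆ τ),
    (ext τ υ h2).comp (ext σ τ h1) = ext σ υ (h2.trans h1)

attribute [instance] Cosheaf.instAdd Cosheaf.instMod Cosheaf.instFD

variable {F : Type} [Field F]

/-- The extension map `C_{σ ≥ τ}`, extended by zero to all pairs. -/
def Cosheaf.extMap (C : Cosheaf F V) (σ τ : Finset V) : C.stalk σ →ₗ[F] C.stalk τ :=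
  if h : τ ⊆ σ then C.ext σ τ h else 0

/-- The `k`-simplices of `K` (as a type). -/
abbrev SimpComplex.Kk (K : SimpComplex V) (k : ℕ) : Type :=
  {σ : Finset V // σ ∈ K.simplices ∧ σ.card = k + 1}

noncomputable instance (K : SimpComplex V) (k : ℕ) : Fintype (K.Kk k) :=
  Fintype.ofFinite _

instance (K : SimpComplex V) (k : ℕ) : DecidableEq (K.Kk k) :=
  Subtype.instDecidableEq

/-- The chain group `C_k(K;𝒞) = ⊕_{σ ∈ K_k} 𝒞_σ`. -/
abbrev Chain (C : Cosheaf F V) (K : SimpComplex V) (k : ℕ) : Type :=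
  ⨁ σ : K.Kk k, C.stalk σ.1

/-- The boundary map `∂ : C_{k+1}(K;𝒞) → C_k(K;𝒞)`, given on the summand of
`σ` by `∑_τ [σ:τ] · C_{σ ≥ τ}`. -/
def boundary (C : Cosheaf F V) (K : SimpComplex V) (k : ℕ) :
    Chain C K (k + 1) →ₗ[F] Chain C K k :=
  DirectSum.toModule F _ _ fun σ =>
    ∑ τ : K.Kk k, incidence F σ.1 τ.1 •
      ((DirectSum.lof F (K.Kk k) (fun τ' => C.stalk τ'.1) τ).comp (C.extMap σ.1 τ.1))

/-- Cycles in degree `n`. -/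
def cyclesC (C : Cosheaf F V) (K : SimpComplex V) : (n : ℕ) → Submodule F (Chain C K n)
  | 0 => ⊤
  | (n + 1) => LinearMap.ker (boundary C K n)

/-- Cosheaf homology `H_n(K;𝒞)`. -/
abbrev homologyC (C : Cosheaf F V) (K : SimpComplex V) (n : ℕ) : Type :=
  (cyclesC C K n) ⧸ (LinearMap.range (boundary C K n)).comap (cyclesC C K n).subtype

end

noncomputable section

variable {V : Type} [Fintype V] [LinearOrder V] {F : Type} [Field F]

/-- `L` is a subcomplex of `K`. -/
def SimpComplex.Sub (L K : SimpComplex V) : Prop := L.simplices ⊆ K.simplices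

/-- The chain map `C_•(L;𝒞|_L) → C_•(K;𝒞)` induced by a subcomplex inclusion
`L ⊆ K`: in each degree, the inclusion of the direct summand `⊕_{σ ∈ L_k} 𝒞_σ`
into `⊕_{σ ∈ K_k} 𝒞_σ`. -/
def inclChain (C : Cosheaf F V) {L K : SimpComplex V} (h : L.Sub K) (k : ℕ) :
    Chain C L k →ₗ[F] Chain C K k :=
  DirectSum.toModule F _ _ fun σ =>
    DirectSum.lof F (K.Kk k) (fun τ => C.stalk τ.1) ⟨σ.1, ⟨h σ.2.1, σ.2.2⟩⟩


/-- A partial matching on a finite simplicial complex `K`: a set of facet pairs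
`(σ ◁ τ)` of simplices of `K` whose constituents are pairwise distinct. -/
structure Matching (K : SimpComplex V) where
  pairs : Finset (Finset V × Finset V)
  mem_fst : ∀ p ∈ pairs, p.1 ∈ K.simplices
  mem_snd : ∀ p ∈ pairs, p.2 ∈ K.simplices
  facet : ∀ p ∈ pairs, p.1 ⊆ p.2 ∧ p.2.card = p.1.card + 1
  pairwise_distinct : ∀ p ∈ pairs, ∀ q ∈ pairs, p ≠ q →
    p.1 ≠ q.1 ∧ p.1 ≠ q.2 ∧ p.2 ≠ q.1 ∧ p.2 ≠ q.2

/-- A simplex is `Σ`-critical if it appears in no matched pair. -/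
def Matching.Critical {K : SimpComplex V} (S : Matching K) (σ : Finset V) : Prop :=
  ∀ p ∈ S.pairs, σ ≠ p.1 ∧ σ ≠ p.2

/-- `IsSigmaPath S l` : the nonempty list `l = [(σ₁,τ₁),…,(σₘ,τₘ)]` of matched
pairs is a `Σ`-path, i.e. a zig-zag `σ₁ ◁ τ₁ ▷ σ₂ ◁ τ₂ ▷ ⋯ ◁ τₘ` in which each
`σ_{i+1}` is a facet of `τ_i` distinct from `σ_i`. -/
def IsSigmaPath {K : SimpComplex V} (S : Matching K)
    (l : List (Finset V × Finset V)) : Prop :=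
  l ≠ [] ∧ (∀ p ∈ l, p ∈ S.pairs) ∧
    l.Chain' (fun p q => q.1 ⊆ p.2 ∧ p.2.card = q.1.card + 1 ∧ q.1 ≠ p.1)

/-- A partial matching is acyclic if every `Σ`-path of length `> 1` is gradient:
its initial simplex `σ₁` is not a face of its final simplex `τₘ`. -/
def Matching.Acyclic {K : SimpComplex V} (S : Matching K) : Prop :=
  ∀ l, IsSigmaPath S l → ∀ h : l ≠ [], 1 < l.length →
    ¬ (l.head h).1 ⊆ (l.getLast h).2

/-- A matching is compatible with the cosheaf `𝒞` if each matched extension map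
`C_{τ ▷ σ}` is an isomorphism. -/
def Matching.Compatible {K : SimpComplex V} (S : Matching K) (C : Cosheaf F V) : Prop :=
  ∀ p ∈ S.pairs, Function.Bijective (C.extMap p.2 p.1)

/-- The formal inverse `C⁻¹_{τ ▷ σ} : 𝒞_σ → 𝒞_τ` of an invertible extension map
(zero if the extension map is not invertible). -/
def Cosheaf.invExt (C : Cosheaf F V) (τ σ : Finset V) : C.stalk σ →ₗ[F] C.stalk τ :=
  if h : Function.Bijective (C.extMap τ σ) then
    ((LinearEquiv.ofBijective (C.extMap τ σ) h).symm : C.stalk σ →ₗ[F] C.stalk τ)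
  else 0

/-- The (unsigned) `𝒞`-weight of a `Σ`-path `[(σ₁,τ₁),…,(σₘ,τₘ)]`:
`C⁻¹_{τₘ▷σₘ} ∘ C_{τₘ₋₁▷σₘ} ∘ ⋯ ∘ C_{τ₁▷σ₂} ∘ C⁻¹_{τ₁▷σ₁} : 𝒞_{σ₁} → 𝒞_{τₘ}`. -/
def pathWeight (C : Cosheaf F V) :
    (l : List (Finset V × Finset V)) → (h : l ≠ []) →
      (C.stalk (l.head h).1 →ₗ[F] C.stalk (l.getLast h).2)
  | [p], _ => C.invExt p.2 p.1
  | p :: q :: l, _ =>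
    (pathWeight C (q :: l) (by simp)).comp ((C.extMap p.2 q.1).comp (C.invExt p.2 p.1))

/-- The sign `(-1)^m · ∏[τᵢ:σᵢ] · ∏[τᵢ:σᵢ₊₁]` of a `Σ`-path. -/
def pathSign (F : Type) [Field F] {V : Type} [Fintype V] [LinearOrder V] :
    List (Finset V × Finset V) → F
  | [] => 1
  | [p] => - incidence F p.2 p.1
  | p :: q :: l => (- incidence F p.2 p.1) * incidence F p.2 q.1 * pathSign F (q :: l)

noncomputable instance : Fintype {l : List (Finset V × Finset V) // l.Nodup} := by
  infer_instance

/-- The Morse boundary block `[α:ω]_Σ : 𝒞_α → 𝒞_ω`, namely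
`[α:ω]·C_{α▷ω} + ∑_ρ [τ:ω]·C_{τ▷ω} ∘ ω_ρ ∘ C_{α▷σ}·[α:σ]`, the sum being over
`Σ`-paths `ρ` from `σ` to `τ` (incidence numbers kill all terms where `σ` is not
a facet of `α` or `ω` is not a facet of `τ`; by acyclicity a `Σ`-path never
repeats a pair, so the sum may be taken over duplicate-free lists). -/
noncomputable def morseBlock {K : SimpComplex V} (C : Cosheaf F V) (S : Matching K)
    (α ω : Finset V) : C.stalk α →ₗ[F] C.stalk ω :=
  incidence F α ω • C.extMap α ω +
    ∑ ρ : {l : List (Finset V × Finset V) // l.Nodup},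
      if h : IsSigmaPath S ρ.1 then
        (pathSign F ρ.1 * incidence F α (ρ.1.head h.1).1 *
            incidence F (ρ.1.getLast h.1).2 ω) •
          ((C.extMap (ρ.1.getLast h.1).2 ω).comp
            ((pathWeight C ρ.1 h.1).comp (C.extMap α (ρ.1.head h.1).1)))
      else 0

/-- The `Σ`-critical `k`-simplices of `K`. -/
abbrev critIdx {K : SimpComplex V} (S : Matching K) (k : ℕ) : Type :=
  {σ : Finset V // (σ ∈ K.simplices ∧ σ.card = k + 1) ∧ S.Critical σ}

noncomputable instance {K : SimpComplex V} (S : Matching K) (k : ℕ) :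
    Fintype (critIdx S k) := Fintype.ofFinite _

/-- The Morse chain group `C^Σ_k(K;𝒞) = ⊕_{α critical} 𝒞_α`. -/
abbrev MorseChain {K : SimpComplex V} (C : Cosheaf F V) (S : Matching K) (k : ℕ) :
    Type :=
  ⨁ σ : critIdx S k, C.stalk σ.1

/-- The Morse boundary map, given blockwise by `[α:ω]_Σ`. -/
noncomputable def morseBoundary {K : SimpComplex V} (C : Cosheaf F V) (S : Matching K)
    (k : ℕ) : MorseChain C S (k + 1) →ₗ[F] MorseChain C S k :=
  DirectSum.toModule F _ _ fun α =>
    ∑ ω : critIdx S k,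
      (DirectSum.lof F (critIdx S k) (fun ω' => C.stalk ω'.1) ω).comp
        (morseBlock C S α.1 ω.1)

/-- Morse cycles in degree `n`. -/
noncomputable def morseCycles {K : SimpComplex V} (C : Cosheaf F V) (S : Matching K) :
    (n : ℕ) → Submodule F (MorseChain C S n)
  | 0 => ⊤
  | (n + 1) => LinearMap.ker (morseBoundary C S n)

/-- Morse homology in degree `n`. -/
noncomputable abbrev morseHomology {K : SimpComplex V} (C : Cosheaf F V)
    (S : Matching K) (n : ℕ) : Type :=
  (morseCycles C S n) ⧸
    (LinearMap.range (morseBoundary C S n)).comap (morseCycles C S n).subtype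

end

/-!
Everything happens on the total chain group `⨁_σ 𝒞_σ` over all vertex sets. There the boundary
`∂` squares to zero, `L`, `U`, `A` project onto lower, upper and critical simplices, and `E`
inverts the matched extension maps (with sign), so that `E G = U` for the matched extensions `G`
by compatibility. The operator `T = L (∂ E + 1)` takes one step `σ ◁ τ ▷ σ'` of a gradient path,
the `+ 1` cancelling the step back to `σ' = σ`; by acyclicity `T` is nilpotent, so `Q = ∑ Tᵐ`
inverts `1 - T`. Expanding `Tᵐ` over paths identifies the blocks of `P = ∂ + ∂ E Q L ∂` with the
Morse blocks. Ring identities alone give `P² = 0`, `L P = 0` and `P E = 0`, hence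
`P A P = P (1 - L - E G) P = 0`, which is `∂^Σ ∘ ∂^Σ = 0` read blockwise.
-/

theorem LinearMap.sum_comp {R M N P ι : Type*} [Semiring R] [AddCommMonoid M] [AddCommMonoid N]
    [AddCommMonoid P] [Module R M] [Module R N] [Module R P] (s : Finset ι)
    (f : ι → N →ₗ[R] P) (g : M →ₗ[R] N) : (∑ i ∈ s, f i).comp g = ∑ i ∈ s, (f i).comp g := by
  ext; simp

namespace DirectSum

section Blocks

variable {R : Type*} [Semiring R]
  {ι : Type*} [DecidableEq ι] {M : ι → Type*} [∀ i, AddCommMonoid (M i)] [∀ i, Module R (M i)]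
  {κ : Type*} {N : κ → Type*} [∀ k, AddCommMonoid (N k)] [∀ k, Module R (N k)]

def block (f : (⨁ i, M i) →ₗ[R] ⨁ k, N k) (i : ι) (k : κ) : M i →ₗ[R] N k :=
  (component R κ N k).comp (f.comp (lof R ι M i))

theorem block_apply (f : (⨁ i, M i) →ₗ[R] ⨁ k, N k) (i : ι) (k : κ) (x : M i) :
    block f i k x = component R κ N k (f (lof R ι M i x)) := rfl

variable [DecidableEq κ] [Fintype κ]

def ofBlocks (B : ∀ i k, M i →ₗ[R] N k) : (⨁ i, M i) →ₗ[R] ⨁ k, N k :=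
  toModule R ι _ fun i => ∑ k, (lof R κ N k).comp (B i k)

@[simp]
theorem ofBlocks_lof (B : ∀ i k, M i →ₗ[R] N k) (i : ι) (x : M i) :
    ofBlocks B (lof R ι M i x) = ∑ k, lof R κ N k (B i k x) := by
  simp [ofBlocks, toModule_lof]

@[simp]
theorem block_ofBlocks (B : ∀ i k, M i →ₗ[R] N k) : block (ofBlocks B) = B := by
  ext i k x
  rw [block_apply, ofBlocks_lof, map_sum, Finset.sum_eq_single k (fun j _ hj => by
    rw [component.of, dif_neg hj]) (by simp), component.lof_self]

@[simp]
theorem ofBlocks_block (f : (⨁ i, M i) →ₗ[R] ⨁ k, N k) : ofBlocks (block f) = f :=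
  linearMap_ext R fun i => LinearMap.ext fun x => by
    rw [LinearMap.comp_apply, ofBlocks_lof]
    exact sum_univ_of _

theorem ext_block {f g : (⨁ i, M i) →ₗ[R] ⨁ k, N k} (h : block f = block g) : f = g := by
  rw [← ofBlocks_block f, ← ofBlocks_block g, h]

theorem ofBlocks_eq_zero {B : ∀ i k, M i →ₗ[R] N k} (h : ∀ i k, B i k = 0) : ofBlocks B = 0 :=
  linearMap_ext R fun i => LinearMap.ext fun x => by simp [h]

theorem ofBlocks_comp_ofBlocks {μ : Type*} [DecidableEq μ] [Fintype μ] {P : μ → Type*}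
    [∀ m, AddCommMonoid (P m)] [∀ m, Module R (P m)]
    (B : ∀ i k, M i →ₗ[R] N k) (B' : ∀ k m, N k →ₗ[R] P m) :
    (ofBlocks B').comp (ofBlocks B) = ofBlocks fun i m => ∑ k, (B' k m).comp (B i k) :=
  linearMap_ext R fun i => LinearMap.ext fun x => by
    simp only [LinearMap.comp_apply, ofBlocks_lof, map_sum, LinearMap.sum_apply]
    exact Finset.sum_comm

end Blocks

section Endomorphisms

variable (R : Type*) [Semiring R] {ι : Type*} [DecidableEq ι]
  (M : ι → Type*) [∀ i, AddCommMonoid (M i)] [∀ i, Module R (M i)]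

def proj (p : ι → Prop) [DecidablePred p] : Module.End R (⨁ i, M i) :=
  toModule R ι _ fun i => if p i then lof R ι M i else 0

variable {R M}

@[simp]
theorem block_add (f g : Module.End R (⨁ i, M i)) (i k : ι) :
    block (f + g) i k = block f i k + block g i k := by
  ext; simp [block_apply]

theorem block_sum {α : Type*} (s : Finset α) (f : α → Module.End R (⨁ i, M i)) (i k : ι) :
    block (∑ a ∈ s, f a) i k = ∑ a ∈ s, block (f a) i k := by
  ext; simp [block_apply]

@[simp]
theorem block_zero (i k : ι) : block (0 : Module.End R (⨁ i, M i)) i k = 0 := by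
  ext; simp [block_apply]

@[simp]
theorem block_one_self (i : ι) : block (1 : Module.End R (⨁ i, M i)) i i = LinearMap.id := by
  ext; simp [block_apply]

theorem block_one_of_ne {i k : ι} (h : i ≠ k) : block (1 : Module.End R (⨁ i, M i)) i k = 0 := by
  ext; simp [block_apply, component.of, h]

variable (p : ι → Prop) [DecidablePred p]

@[simp]
theorem proj_lof (i : ι) (x : M i) :
    proj R M p (lof R ι M i x) = if p i then lof R ι M i x else 0 := by
  simp only [proj, toModule_lof]
  split_ifs <;> rfl

theorem proj_mul_proj : proj R M p * proj R M p = (proj R M p : Module.End R (⨁ i, M i)) :=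
  linearMap_ext R fun i => LinearMap.ext fun x => by by_cases h : p i <;> simp [h]

theorem block_mul_proj (f : Module.End R (⨁ i, M i)) (i k : ι) :
    block (f * proj R M p) i k = if p i then block f i k else 0 := by
  ext x; by_cases h : p i <;> simp [block_apply, h]

variable [Fintype ι]

theorem block_mul (f g : Module.End R (⨁ i, M i)) (i k : ι) :
    block (f * g) i k = ∑ j, (block f j k).comp (block g i j) := by
  rw [Module.End.mul_eq_comp, ← ofBlocks_block f, ← ofBlocks_block g, ofBlocks_comp_ofBlocks,
    block_ofBlocks, ofBlocks_block, ofBlocks_block]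

theorem block_proj_mul (f : Module.End R (⨁ i, M i)) (i k : ι) :
    block (proj R M p * f) i k = if p k then block f i k else 0 := by
  rw [block_mul, Finset.sum_eq_single k]
  · by_cases h : p k <;> ext <;> simp [block_apply, h]
  · intro j _ hj
    ext x
    by_cases h : p j <;> simp [block_apply, component.of, h, hj]
  · simp

end Endomorphisms

end DirectSum

theorem sum_nodup_eq_sum_range_sum_ofFn {X M : Type*} [Fintype X] [AddCommMonoid M]
    (g : List X → M) (n : ℕ) (hg : ∀ l, g l ≠ 0 → l.Nodup ∧ l ≠ [] ∧ l.length ≤ n) :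
    ∑ ρ : {l : List X // l.Nodup}, g ρ.1 =
      ∑ m ∈ Finset.range n, ∑ f : Fin (m + 1) → X, g (List.ofFn f) := by
  have hnil : ∑ f : Fin 0 → X, g (List.ofFn f) = 0 :=
    Finset.sum_eq_zero fun f _ => by_contra fun h => (hg _ h).2.1 List.ofFn_zero
  calc ∑ ρ : {l : List X // l.Nodup}, g ρ.1
      = ∑ x ∈ (Finset.range (n + 1)).sigma fun m => (Finset.univ : Finset (Fin m → X)),
          g (List.ofFn x.2) := by
        refine Finset.sum_bij_ne_zero (fun ρ _ _ => ⟨ρ.1.length, ρ.1.get⟩) (fun ρ _ h => ?_)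
          (fun ρ₁ _ _ ρ₂ _ _ h => ?_) (fun x _ h => ?_) fun ρ _ _ => by rw [List.ofFn_get]
        · simpa [Nat.lt_succ_iff] using (hg _ h).2.2
        · exact Subtype.ext (by simpa using List.ofFn_inj'.2 h)
        · refine ⟨⟨List.ofFn x.2, (hg _ h).1⟩, Finset.mem_univ _, by simpa using h, ?_⟩
          exact List.ofFn_inj'.1 (List.ofFn_get _)
    _ = ∑ m ∈ Finset.range (n + 1), ∑ f : Fin m → X, g (List.ofFn f) := Finset.sum_sigma _ _ _
    _ = _ := by rw [Finset.sum_range_succ', hnil, add_zero]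

section Perturbation

variable {R : Type*} [Ring R] {D E L Q : R}

theorem add_mul_mul_eq_zero_of_mul_sub_eq_one (hL : L * L = L)
    (hQ : (1 - L * (D * E + 1)) * Q = 1) : L + L * D * (E * Q * L) = 0 := by
  set T := L * (D * E + 1) with hT
  have hTQ : T * Q = Q - 1 := by rw [← hQ]; noncomm_ring
  have hLT : L * T = T := by rw [hT, ← mul_assoc, hL]
  have hLQ : L * Q = L + Q - 1 := by
    calc L * Q = L * ((1 - T) * Q + T * Q) := by noncomm_ring
      _ = L + Q - 1 := by rw [hQ, hTQ, mul_add, mul_one, ← hTQ, ← mul_assoc, hLT, hTQ]; abel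
  calc L + L * D * (E * Q * L) = L + T * Q * L - L * Q * L := by rw [hT]; noncomm_ring
    _ = L - L * L := by rw [hTQ, hLQ]; noncomm_ring
    _ = 0 := by rw [hL, sub_self]

theorem add_mul_mul_eq_zero_of_sub_mul_eq_one (hL : L * L = L) (hEL : E * L = E)
    (hQ : Q * (1 - L * (D * E + 1)) = 1) : E + E * Q * L * D * E = 0 := by
  set T := L * (D * E + 1) with hT
  have hQT : Q * T = Q - 1 := by rw [← hQ]; noncomm_ring
  have hTL : T * L = T := by
    calc T * L = L * D * (E * L) + L * L := by rw [hT]; noncomm_ring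
      _ = T := by rw [hEL, hL, hT]; noncomm_ring
  have hQL : Q * L = L + Q - 1 := by
    calc Q * L = (Q * (1 - T) + Q * T) * L := by noncomm_ring
      _ = L + Q - 1 := by rw [hQ, hQT, add_mul, one_mul, ← hQT, mul_assoc, hTL, hQT]; abel
  calc E + E * Q * L * D * E = E + E * (Q * T) - E * (Q * L) := by rw [hT]; noncomm_ring
    _ = E - E * L := by rw [hQT, hQL]; noncomm_ring
    _ = 0 := by rw [hEL, sub_self]

theorem perturbationTerm_succ (hL : L * L = L) (hEL : E * L = E) (m : ℕ) :
    D * E * (L * (D * E + 1)) ^ (m + 1) * L * D =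
      D * E * (L * (D * E + 1)) ^ m * L * D * E * D + D * E * (L * (D * E + 1)) ^ m * L * D := by
  calc D * E * (L * (D * E + 1)) ^ (m + 1) * L * D
      = D * E * (L * (D * E + 1)) ^ m * L * D * (E * L) * D +
          D * E * (L * (D * E + 1)) ^ m * (L * L) * D := by rw [pow_succ]; noncomm_ring
    _ = _ := by rw [hEL, hL]

theorem perturbation_mul_mul_perturbation_eq_zero {G U A : R} (hD : D * D = 0)
    (hL : L * L = L) (hEL : E * L = E) (hEG : E * G = U) (hLUA : L + U + A = 1)
    (hQ : (1 - L * (D * E + 1)) * Q = 1) (hQ' : Q * (1 - L * (D * E + 1)) = 1) :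
    (D + D * (E * Q * L) * D) * A * (D + D * (E * Q * L) * D) = 0 := by
  set P := D + D * (E * Q * L) * D
  have hPD : P * D = 0 := by
    simp only [P, add_mul, mul_assoc, hD, mul_zero, add_zero]
  have hPP : P * P = 0 := by
    calc P * P = P * D + P * D * (E * Q * L) * D := by simp only [P]; noncomm_ring
      _ = 0 := by rw [hPD]; simp
  have hLP : L * P = 0 := by
    calc L * P = (L + L * D * (E * Q * L)) * D := by simp only [P]; noncomm_ring
      _ = 0 := by rw [add_mul_mul_eq_zero_of_mul_sub_eq_one hL hQ, zero_mul]
  have hPE : P * E = 0 := by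
    calc P * E = D * (E + E * Q * L * D * E) := by simp only [P]; noncomm_ring
      _ = 0 := by rw [add_mul_mul_eq_zero_of_sub_mul_eq_one hL hEL hQ', mul_zero]
  calc P * A * P = P * P - P * (L * P) - P * E * G * P := by
        rw [eq_sub_of_add_eq' hLUA, ← hEG]; noncomm_ring
    _ = 0 := by rw [hPP, hLP, hPE]; simp

end Perturbation

section Incidence

variable {V : Type} [LinearOrder V]

/-- The sign `(-1)^i` of deleting the vertex `v`, the `i`-th vertex of `σ`. -/
def faceSign (F : Type) [Field F] (σ : Finset V) (v : V) : F :=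
  (-1) ^ (σ.filter fun w => w < v).card

variable {F : Type} [Field F]

theorem eq_erase_iff_of_subset {σ τ : Finset V} (h : τ ⊆ σ ∧ σ.card = τ.card + 1) {v : V}
    (hv : v ∈ σ) : τ = σ.erase v ↔ v ∉ τ := by
  constructor
  · rintro rfl
    exact Finset.notMem_erase v σ
  · intro hvτ
    refine Finset.eq_of_subset_of_card_le (fun w hw => Finset.mem_erase.2 ⟨?_, h.1 hw⟩) ?_
    · rintro rfl; exact hvτ hw
    · rw [Finset.card_erase_of_mem hv, h.2]; omega

theorem incidence_eq_sum_erase (σ τ : Finset V) :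
    incidence F σ τ = ∑ v ∈ σ, if τ = σ.erase v then faceSign F σ v else 0 := by
  rw [incidence]
  split_ifs with h
  · rw [← Finset.sum_filter]
    refine Finset.sum_congr (Finset.ext fun v => ?_) fun _ _ => rfl
    simp only [Finset.mem_sdiff, Finset.mem_filter]
    exact ⟨fun ⟨hv, hvτ⟩ => ⟨hv, (eq_erase_iff_of_subset h hv).2 hvτ⟩,
      fun ⟨hv, he⟩ => ⟨hv, (eq_erase_iff_of_subset h hv).1 he⟩⟩
  · refine (Finset.sum_eq_zero fun v hv => if_neg ?_).symm
    rintro rfl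
    exact h ⟨Finset.erase_subset v σ, (Finset.card_erase_add_one hv).symm⟩

theorem facet_of_incidence_ne_zero {σ τ : Finset V} (h : incidence F σ τ ≠ 0) :
    τ ⊆ σ ∧ σ.card = τ.card + 1 := by
  by_contra hf
  exact h (if_neg hf)

theorem incidence_mul_self {σ τ : Finset V} (h : τ ⊆ σ ∧ σ.card = τ.card + 1) :
    incidence F σ τ * incidence F σ τ = 1 := by
  obtain ⟨v, hv⟩ : ∃ v, σ \ τ = {v} := Finset.card_eq_one.1 (by
    rw [Finset.card_sdiff_of_subset h.1, h.2]; omega)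
  rw [incidence, if_pos h, hv, Finset.sum_singleton, ← mul_pow]
  simp

theorem faceSign_erase_of_lt {σ : Finset V} {v w : V} (hv : v ∈ σ) (hvw : v < w) :
    faceSign F (σ.erase v) w = - faceSign F σ w := by
  have hmem : v ∈ σ.filter fun u => u < w := Finset.mem_filter.2 ⟨hv, hvw⟩
  rw [faceSign, faceSign, Finset.filter_erase, ← Finset.card_erase_add_one hmem, pow_succ]
  ring

theorem faceSign_erase_of_gt {σ : Finset V} {v w : V} (hvw : w < v) :
    faceSign F (σ.erase v) w = faceSign F σ w := by
  rw [faceSign, faceSign, Finset.filter_erase, Finset.erase_eq_of_notMem]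
  simp [hvw.not_gt]

theorem faceSign_mul_faceSign_erase_add_swap {σ : Finset V} {v w : V} (hv : v ∈ σ) (hw : w ∈ σ)
    (hvw : v ≠ w) :
    faceSign F σ v * faceSign F (σ.erase v) w + faceSign F σ w * faceSign F (σ.erase w) v = 0 := by
  rcases hvw.lt_or_gt with h | h
  · rw [faceSign_erase_of_lt hv h, faceSign_erase_of_gt h]; ring
  · rw [faceSign_erase_of_gt h, faceSign_erase_of_lt hw h]; ring

theorem sum_incidence_mul_incidence [Fintype V] (α γ : Finset V) :
    ∑ β : Finset V, incidence F α β * incidence F β γ = 0 := by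
  set f : (_ : V) × V → F := fun p =>
    faceSign F α p.1 * if γ = (α.erase p.1).erase p.2 then faceSign F (α.erase p.1) p.2 else 0
  calc ∑ β : Finset V, incidence F α β * incidence F β γ
      = ∑ v ∈ α, faceSign F α v * incidence F (α.erase v) γ := by
        simp_rw [incidence_eq_sum_erase α, Finset.sum_mul, ite_mul, zero_mul]
        rw [Finset.sum_comm]
        simp
    _ = ∑ p ∈ α.sigma fun v => α.erase v, f p := by
        rw [Finset.sum_sigma]
        simp_rw [incidence_eq_sum_erase (α.erase _), Finset.mul_sum, f]
    _ = 0 := by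
        refine Finset.sum_involution (fun p _ => ⟨p.2, p.1⟩) (fun p hp => ?_) (fun p hp _ => ?_)
          (fun p hp => ?_) fun p _ => rfl
        · obtain ⟨hv, hw⟩ := Finset.mem_sigma.1 hp
          obtain ⟨hwv, hw⟩ := Finset.mem_erase.1 hw
          simp only [f, Finset.erase_right_comm (a := p.2)]
          split_ifs
          · exact faceSign_mul_faceSign_erase_add_swap hv hw hwv.symm
          · simp
        · exact fun h => (Finset.mem_erase.1 (Finset.mem_sigma.1 hp).2).1 (congrArg Sigma.fst h)
        · obtain ⟨hv, hw⟩ := Finset.mem_sigma.1 hp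
          obtain ⟨hwv, hw⟩ := Finset.mem_erase.1 hw
          exact Finset.mem_sigma.2 ⟨hw, Finset.mem_erase.2 ⟨hwv.symm, hv⟩⟩

end Incidence

section Cosheaf

variable {V : Type} [LinearOrder V] {F : Type} [Field F] (C : Cosheaf F V)

theorem Cosheaf.extMap_comp_extMap {α β γ : Finset V} (h₁ : β ⊆ α) (h₂ : γ ⊆ β) :
    (C.extMap β γ).comp (C.extMap α β) = C.extMap α γ := by
  rw [Cosheaf.extMap, Cosheaf.extMap, Cosheaf.extMap, dif_pos h₁, dif_pos h₂,
    dif_pos (h₂.trans h₁), C.ext_comp]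

variable {C} {σ τ : Finset V}

theorem Cosheaf.extMap_comp_invExt (hb : Function.Bijective (C.extMap τ σ)) :
    (C.extMap τ σ).comp (C.invExt τ σ) = LinearMap.id := by
  ext x
  rw [Cosheaf.invExt, dif_pos hb]
  exact (LinearEquiv.ofBijective _ hb).apply_symm_apply x

theorem Cosheaf.invExt_comp_extMap (hb : Function.Bijective (C.extMap τ σ)) :
    (C.invExt τ σ).comp (C.extMap τ σ) = LinearMap.id := by
  ext x
  rw [Cosheaf.invExt, dif_pos hb]
  exact (LinearEquiv.ofBijective _ hb).symm_apply_apply x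

end Cosheaf

section Matching

variable {V : Type} [LinearOrder V] {K : SimpComplex V} (S : Matching K)

def Matching.IsLower (σ : Finset V) : Prop := ∃ τ, (σ, τ) ∈ S.pairs

def Matching.IsUpper (τ : Finset V) : Prop := ∃ σ, (σ, τ) ∈ S.pairs

variable {S}

theorem Matching.eq_of_fst_eq {p q : Finset V × Finset V} (hp : p ∈ S.pairs)
    (hq : q ∈ S.pairs) (h : p.1 = q.1) : p = q := by
  by_contra hpq
  exact (S.pairwise_distinct p hp q hq hpq).1 h

theorem Matching.eq_of_snd_eq {p q : Finset V × Finset V} (hp : p ∈ S.pairs)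
    (hq : q ∈ S.pairs) (h : p.2 = q.2) : p = q := by
  by_contra hpq
  exact (S.pairwise_distinct p hp q hq hpq).2.2.2 h

theorem Matching.snd_eq_of_mem {σ τ τ' : Finset V} (h : (σ, τ) ∈ S.pairs)
    (h' : (σ, τ') ∈ S.pairs) : τ = τ' :=
  (Prod.ext_iff.1 (S.eq_of_fst_eq h h' rfl)).2

theorem Matching.fst_eq_of_mem {σ σ' τ : Finset V} (h : (σ, τ) ∈ S.pairs)
    (h' : (σ', τ) ∈ S.pairs) : σ = σ' :=
  (Prod.ext_iff.1 (S.eq_of_snd_eq h h' rfl)).1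

theorem Matching.not_isUpper_of_isLower {σ : Finset V} (h : S.IsLower σ) : ¬S.IsUpper σ := by
  rintro ⟨ρ, hρ⟩
  obtain ⟨τ, hτ⟩ := h
  by_cases hpq : (σ, τ) = (ρ, σ)
  · obtain ⟨-, rfl⟩ := Prod.mk.inj hpq
    exact absurd (S.facet _ hτ).2 (by simp)
  · exact (S.pairwise_distinct _ hτ _ hρ hpq).2.1 rfl

theorem Matching.critical_iff {σ : Finset V} : S.Critical σ ↔ ¬S.IsLower σ ∧ ¬S.IsUpper σ := by
  refine ⟨fun h => ⟨fun ⟨τ, hτ⟩ => (h _ hτ).1 rfl, fun ⟨ρ, hρ⟩ => (h _ hρ).2 rfl⟩, ?_⟩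
  rintro ⟨hl, hu⟩ ⟨σ', τ'⟩ hp
  exact ⟨by rintro rfl; exact hl ⟨τ', hp⟩, by rintro rfl; exact hu ⟨σ', hp⟩⟩

end Matching

section SigmaPaths

variable {V : Type} [LinearOrder V] {K : SimpComplex V} {S : Matching K}
  {p q : Finset V × Finset V} {l : List (Finset V × Finset V)}

theorem isSigmaPath_singleton_iff : IsSigmaPath S [p] ↔ p ∈ S.pairs :=
  ⟨fun h => h.2.1 p List.mem_cons_self,
    fun hp => ⟨List.cons_ne_nil _ _, by simpa using hp, List.isChain_singleton _⟩⟩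

theorem isSigmaPath_cons_cons_iff :
    IsSigmaPath S (p :: q :: l) ↔
      p ∈ S.pairs ∧ (q.1 ⊆ p.2 ∧ p.2.card = q.1.card + 1 ∧ q.1 ≠ p.1) ∧ IsSigmaPath S (q :: l) :=
  ⟨fun h => ⟨h.2.1 p List.mem_cons_self, (List.isChain_cons_cons.1 h.2.2).1,
      List.cons_ne_nil _ _, fun r hr => h.2.1 r (List.mem_cons_of_mem _ hr),
      (List.isChain_cons_cons.1 h.2.2).2⟩,
    fun ⟨hp, hstep, hq⟩ => ⟨List.cons_ne_nil _ _, List.forall_mem_cons.2 ⟨hp, hq.2.1⟩,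
      List.isChain_cons_cons.2 ⟨hstep, hq.2.2⟩⟩⟩

theorem IsSigmaPath.infix {l' : List (Finset V × Finset V)} (h : IsSigmaPath S l)
    (hl' : l' <:+: l) (hne : l' ≠ []) : IsSigmaPath S l' :=
  ⟨hne, fun r hr => h.2.1 r (hl'.subset hr), List.IsChain.infix h.2.2 hl'⟩

theorem IsSigmaPath.notMem_of_cons (hacyc : S.Acyclic) (h : IsSigmaPath S (p :: l)) : p ∉ l := by
  intro hp
  obtain ⟨s, t, rfl⟩ := List.append_of_mem hp
  have hcycle : IsSigmaPath S (p :: (s ++ [p])) :=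
    h.infix ⟨[], t, by simp⟩ (List.cons_ne_nil _ _)
  refine hacyc _ hcycle (List.cons_ne_nil _ _) (by simp) ?_
  simpa using (S.facet p (h.2.1 p List.mem_cons_self)).1

theorem IsSigmaPath.nodup (hacyc : S.Acyclic) (h : IsSigmaPath S l) : l.Nodup := by
  induction l with
  | nil => exact List.nodup_nil
  | cons p l ih =>
    refine List.nodup_cons.2 ⟨h.notMem_of_cons hacyc, ?_⟩
    cases l with
    | nil => exact List.nodup_nil
    | cons q l => exact ih (h.infix (List.suffix_cons p _).isInfix (List.cons_ne_nil q l))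

theorem IsSigmaPath.length_le (hacyc : S.Acyclic) (h : IsSigmaPath S l) :
    l.length ≤ S.pairs.card := by
  rw [← List.toFinset_card_of_nodup (h.nodup hacyc)]
  exact Finset.card_le_card fun r hr => h.2.1 r (List.mem_toFinset.1 hr)

theorem IsSigmaPath.card_getLast (h : IsSigmaPath S (p :: l)) :
    ((p :: l).getLast (List.cons_ne_nil p l)).2.card = p.1.card + 1 := by
  induction l generalizing p with
  | nil => exact (S.facet p (isSigmaPath_singleton_iff.1 h)).2
  | cons q l ih =>
    obtain ⟨hp, ⟨-, hcard, -⟩, hq⟩ := isSigmaPath_cons_cons_iff.1 h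
    rw [List.getLast_cons (List.cons_ne_nil q l), ih hq]
    have := (S.facet p hp).2
    omega

end SigmaPaths

noncomputable section TotalComplex

variable {V : Type} [Fintype V] [LinearOrder V] {F : Type} [Field F] (C : Cosheaf F V)
  {K : SimpComplex V} (S : Matching K)

abbrev TotalChain : Type := ⨁ σ : Finset V, C.stalk σ

def totalBoundary : Module.End F (TotalChain C) :=
  ofBlocks fun α ω => incidence F α ω • C.extMap α ω

def matchingInv : Module.End F (TotalChain C) :=
  ofBlocks fun σ τ => if (σ, τ) ∈ S.pairs then -incidence F τ σ • C.invExt τ σ else 0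

def matchingExt : Module.End F (TotalChain C) :=
  ofBlocks fun τ σ => if (σ, τ) ∈ S.pairs then -incidence F τ σ • C.extMap τ σ else 0

def lowerProj : Module.End F (TotalChain C) := proj F _ S.IsLower

def upperProj : Module.End F (TotalChain C) := proj F _ S.IsUpper

def criticalProj : Module.End F (TotalChain C) := proj F _ S.Critical

def gradientStep : Module.End F (TotalChain C) :=
  lowerProj C S * (totalBoundary C * matchingInv C S + 1)

def morseOp : Module.End F (TotalChain C) :=
  totalBoundary C + totalBoundary C *
    (matchingInv C S * (∑ m ∈ Finset.range (S.pairs.card + 1), gradientStep C S ^ m) *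
      lowerProj C S) * totalBoundary C

variable {C S}

@[simp]
theorem block_totalBoundary (α ω : Finset V) :
    block (totalBoundary C) α ω = incidence F α ω • C.extMap α ω :=
  congrFun₂ (block_ofBlocks _) α ω

theorem block_matchingInv (σ τ : Finset V) :
    block (matchingInv C S) σ τ =
      if (σ, τ) ∈ S.pairs then -incidence F τ σ • C.invExt τ σ else 0 :=
  congrFun₂ (block_ofBlocks _) σ τ

theorem block_matchingExt (τ σ : Finset V) :
    block (matchingExt C S) τ σ =
      if (σ, τ) ∈ S.pairs then -incidence F τ σ • C.extMap τ σ else 0 :=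
  congrFun₂ (block_ofBlocks _) τ σ

end TotalComplex

section TotalComplexIdentities

variable {V : Type} [LinearOrder V] {F : Type} [Field F] {C : Cosheaf F V}
  {K : SimpComplex V} {S : Matching K}

theorem lowerProj_mul_self : lowerProj C S * lowerProj C S = lowerProj C S :=
  proj_mul_proj _

theorem lowerProj_add_upperProj_add_criticalProj :
    lowerProj C S + upperProj C S + criticalProj C S = 1 := by
  refine linearMap_ext F fun σ => LinearMap.ext fun x => ?_
  simp only [lowerProj, upperProj, criticalProj, LinearMap.comp_apply, LinearMap.add_apply,
    proj_lof, Module.End.one_apply, S.critical_iff]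
  by_cases hl : S.IsLower σ
  · simp [hl, S.not_isUpper_of_isLower hl]
  · by_cases hu : S.IsUpper σ <;> simp [hl, hu]

variable [Fintype V]

theorem totalBoundary_mul_self : totalBoundary C * totalBoundary C = 0 := by
  refine ext_block (funext₂ fun α γ => ?_)
  have hterm : ∀ β, (incidence F β γ • C.extMap β γ).comp (incidence F α β • C.extMap α β) =
      (incidence F α β * incidence F β γ) • C.extMap α γ := by
    intro β
    rw [LinearMap.comp_smul, LinearMap.smul_comp, smul_smul]
    by_cases h : incidence F α β * incidence F β γ = 0
    · rw [h, zero_smul, zero_smul]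
    · obtain ⟨hβ, -⟩ := facet_of_incidence_ne_zero (left_ne_zero_of_mul h)
      obtain ⟨hγ, -⟩ := facet_of_incidence_ne_zero (right_ne_zero_of_mul h)
      rw [C.extMap_comp_extMap hβ hγ]
  simp only [block_mul, block_totalBoundary, hterm, ← Finset.sum_smul,
    sum_incidence_mul_incidence, zero_smul, block_zero]

theorem matchingInv_mul_lowerProj : matchingInv C S * lowerProj C S = matchingInv C S := by
  refine ext_block (funext₂ fun σ τ => ?_)
  rw [lowerProj, block_mul_proj, block_matchingInv]
  by_cases hστ : (σ, τ) ∈ S.pairs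
  · rw [if_pos ⟨τ, hστ⟩]
  · rw [if_neg hστ]; split_ifs <;> rfl

theorem matchingInv_mul_matchingExt (hcomp : S.Compatible C) :
    matchingInv C S * matchingExt C S = upperProj C S := by
  refine ext_block (funext₂ fun τ τ' => ?_)
  rw [upperProj, ← one_mul (proj F _ _), block_mul_proj, block_mul]
  simp only [block_matchingInv, block_matchingExt]
  split_ifs with hτ
  · obtain ⟨σ₀, hσ₀⟩ := hτ
    rw [Finset.sum_eq_single σ₀]
    · rw [if_pos hσ₀]
      by_cases hτ' : τ = τ'
      · subst hτ'
        rw [if_pos hσ₀, LinearMap.comp_smul, LinearMap.smul_comp, smul_smul, neg_mul_neg,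
          incidence_mul_self (S.facet _ hσ₀), one_smul, C.invExt_comp_extMap (hcomp _ hσ₀),
          block_one_self]
      · rw [if_neg fun h => hτ' (S.snd_eq_of_mem hσ₀ h),
          LinearMap.zero_comp, block_one_of_ne hτ']
    · intro σ _ hσ
      rw [if_neg fun h => hσ (S.fst_eq_of_mem h hσ₀), LinearMap.comp_zero]
    · simp
  · refine Finset.sum_eq_zero fun σ _ => ?_
    rw [if_neg fun h => hτ ⟨σ, h⟩, LinearMap.comp_zero]

end TotalComplexIdentities

section Nilpotency

variable {V : Type} [Fintype V] [LinearOrder V] {F : Type} [Field F] {C : Cosheaf F V}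
  {K : SimpComplex V} {S : Matching K}

theorem block_mul_matchingInv_of_mem (f : Module.End F (TotalChain C)) {σ τ : Finset V}
    (hστ : (σ, τ) ∈ S.pairs) (ω : Finset V) :
    block (f * matchingInv C S) σ ω = (block f τ ω).comp (-incidence F τ σ • C.invExt τ σ) := by
  rw [block_mul, Finset.sum_eq_single τ, block_matchingInv, if_pos hστ]
  · intro τ' _ hτ'
    rw [block_matchingInv, if_neg fun h => hτ' (S.snd_eq_of_mem h hστ), LinearMap.comp_zero]
  · simp

theorem block_mul_matchingInv_of_not_isLower (f : Module.End F (TotalChain C)) {σ : Finset V}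
    (hσ : ¬S.IsLower σ) (ω : Finset V) : block (f * matchingInv C S) σ ω = 0 := by
  rw [block_mul]
  refine Finset.sum_eq_zero fun τ _ => ?_
  rw [block_matchingInv, if_neg fun h => hσ ⟨τ, h⟩, LinearMap.comp_zero]

theorem isSigmaPath_of_block_gradientStep_ne_zero (hcomp : S.Compatible C) {σ σ' : Finset V}
    (h : block (gradientStep C S) σ σ' ≠ 0) : ∃ τ τ', IsSigmaPath S [(σ, τ), (σ', τ')] := by
  rw [gradientStep, lowerProj, block_proj_mul, block_add] at h
  split_ifs at h with hσ'
  swap; · exact absurd rfl h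
  obtain ⟨τ', hτ'⟩ := hσ'
  by_cases hσ : S.IsLower σ
  swap
  · rw [block_mul_matchingInv_of_not_isLower _ hσ,
      block_one_of_ne fun h => hσ (by subst h; exact ⟨τ', hτ'⟩), add_zero] at h
    exact absurd rfl h
  obtain ⟨τ, hτ⟩ := hσ
  rw [block_mul_matchingInv_of_mem _ hτ, block_totalBoundary] at h
  by_cases hσσ' : σ = σ'
  · -- the step back to `σ` contributes `-1`, cancelled by the `+ 1`
    subst hσσ'
    refine absurd ?_ h
    rw [LinearMap.comp_smul, LinearMap.smul_comp, smul_smul, neg_mul,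
      incidence_mul_self (S.facet _ hτ), C.extMap_comp_invExt (hcomp _ hτ), block_one_self]
    simp
  · rw [block_one_of_ne hσσ', add_zero, LinearMap.comp_smul, LinearMap.smul_comp] at h
    have hfacet := facet_of_incidence_ne_zero (σ := τ) (τ := σ') fun h0 =>
      h (by rw [h0, zero_smul, smul_zero])
    exact ⟨τ, τ', isSigmaPath_cons_cons_iff.2 ⟨hτ, ⟨hfacet.1, hfacet.2, Ne.symm hσσ'⟩,
      isSigmaPath_singleton_iff.2 hτ'⟩⟩

theorem exists_isSigmaPath_of_block_gradientStep_pow_ne_zero (hcomp : S.Compatible C) (m : ℕ)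
    {σ σ' : Finset V} (h : block (gradientStep C S ^ (m + 1)) σ σ' ≠ 0) :
    ∃ τ l, IsSigmaPath S ((σ, τ) :: l) ∧ l.length = m + 1 := by
  induction m generalizing σ with
  | zero =>
    obtain ⟨τ, τ', hpath⟩ := isSigmaPath_of_block_gradientStep_ne_zero hcomp (by simpa using h)
    exact ⟨τ, _, hpath, rfl⟩
  | succ m ih =>
    rw [pow_succ, block_mul] at h
    obtain ⟨β, -, hβ⟩ := Finset.exists_ne_zero_of_sum_ne_zero h
    obtain ⟨τ, τβ, hstep⟩ := isSigmaPath_of_block_gradientStep_ne_zero hcomp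
      fun h0 => hβ (by rw [h0, LinearMap.comp_zero])
    obtain ⟨τβ', l, hpath, hlen⟩ := ih fun h0 => hβ (by rw [h0, LinearMap.zero_comp])
    obtain ⟨hτ, hfacet, -⟩ := isSigmaPath_cons_cons_iff.1 hstep
    obtain rfl : τβ = τβ' := S.snd_eq_of_mem
      (isSigmaPath_singleton_iff.1 (isSigmaPath_cons_cons_iff.1 hstep).2.2)
      (hpath.2.1 _ List.mem_cons_self)
    exact ⟨τ, _, isSigmaPath_cons_cons_iff.2 ⟨hτ, hfacet, hpath⟩, by simp [hlen]⟩

theorem gradientStep_pow_eq_zero (hacyc : S.Acyclic) (hcomp : S.Compatible C) :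
    gradientStep C S ^ (S.pairs.card + 1) = 0 := by
  refine ext_block (funext₂ fun σ σ' => ?_)
  by_contra h
  obtain ⟨τ, l, hpath, hlen⟩ :=
    exists_isSigmaPath_of_block_gradientStep_pow_ne_zero hcomp _ (by simpa using h)
  have := hpath.length_le hacyc
  simp only [List.length_cons] at this
  omega

theorem morseOp_mul_criticalProj_mul_morseOp (hacyc : S.Acyclic) (hcomp : S.Compatible C) :
    morseOp C S * criticalProj C S * morseOp C S = 0 := by
  have hnil := gradientStep_pow_eq_zero hacyc hcomp
  unfold morseOp
  refine perturbation_mul_mul_perturbation_eq_zero totalBoundary_mul_self lowerProj_mul_self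
    matchingInv_mul_lowerProj (matchingInv_mul_matchingExt hcomp)
    lowerProj_add_upperProj_add_criticalProj ?_ ?_
  · rw [← gradientStep, mul_neg_geom_sum, hnil, sub_zero]
  · rw [← gradientStep, geom_sum_mul_neg, hnil, sub_zero]

end Nilpotency

noncomputable section PathExpansion

variable {V : Type} [Fintype V] [LinearOrder V] {F : Type} [Field F] (C : Cosheaf F V)
  {K : SimpComplex V} (S : Matching K)

/-- `pathWeight` with its domain written as `p.1`, so that it composes with `C.extMap α p.1`. -/
def zigzagWeight (p : Finset V × Finset V) (l : List (Finset V × Finset V)) :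
    C.stalk p.1 →ₗ[F] C.stalk ((p :: l).getLast (List.cons_ne_nil p l)).2 :=
  pathWeight C (p :: l) (List.cons_ne_nil p l)

/-- The summand of `morseBlock` along the zigzag `p :: l`, without the requirement that it be a
`Σ`-path. -/
def zigzagTerm (α ω : Finset V) (p : Finset V × Finset V) (l : List (Finset V × Finset V)) :
    C.stalk α →ₗ[F] C.stalk ω :=
  (pathSign F (p :: l) * incidence F α p.1 *
      incidence F ((p :: l).getLast (List.cons_ne_nil p l)).2 ω) •
    ((C.extMap ((p :: l).getLast (List.cons_ne_nil p l)).2 ω).comp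
      ((zigzagWeight C p l).comp (C.extMap α p.1)))

def pathTerm (α ω : Finset V) (l : List (Finset V × Finset V)) : C.stalk α →ₗ[F] C.stalk ω :=
  if h : IsSigmaPath S l then
    (pathSign F l * incidence F α (l.head h.1).1 * incidence F (l.getLast h.1).2 ω) •
      ((C.extMap (l.getLast h.1).2 ω).comp ((pathWeight C l h.1).comp (C.extMap α (l.head h.1).1)))
  else 0

def pathSum (m : ℕ) (α ω : Finset V) : C.stalk α →ₗ[F] C.stalk ω :=
  ∑ f : Fin (m + 1) → Finset V × Finset V, pathTerm C S α ω (List.ofFn f)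

variable {C S}

theorem morseBlock_eq_add_sum_pathTerm (α ω : Finset V) :
    morseBlock C S α ω = incidence F α ω • C.extMap α ω +
      ∑ ρ : {l : List (Finset V × Finset V) // l.Nodup}, pathTerm C S α ω ρ.1 := rfl

theorem pathTerm_cons (α ω : Finset V) (p : Finset V × Finset V) (l : List (Finset V × Finset V)) :
    pathTerm C S α ω (p :: l) = if IsSigmaPath S (p :: l) then zigzagTerm C α ω p l else 0 := by
  unfold pathTerm
  split_ifs <;> rfl

theorem zigzagTerm_cons (α ω : Finset V) (p q : Finset V × Finset V)
    (l : List (Finset V × Finset V)) :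
    zigzagTerm C α ω p (q :: l) = (zigzagTerm C p.2 ω q l).comp
      ((-incidence F p.2 p.1 • C.invExt p.2 p.1).comp (incidence F α p.1 • C.extMap α p.1)) := by
  simp only [zigzagTerm, LinearMap.comp_smul, LinearMap.smul_comp, smul_smul]
  congr 1
  simp only [pathSign, List.getLast_cons (List.cons_ne_nil q l)]
  ring

theorem zigzagTerm_comp_cancel {σ τ : Finset V} (hb : Function.Bijective (C.extMap τ σ))
    (hfacet : σ ⊆ τ ∧ τ.card = σ.card + 1) (α ω : Finset V) (l : List (Finset V × Finset V)) :
    (zigzagTerm C τ ω (σ, τ) l).comp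
      ((-incidence F τ σ • C.invExt τ σ).comp (incidence F α σ • C.extMap α σ)) =
      -zigzagTerm C α ω (σ, τ) l := by
  simp only [zigzagTerm, LinearMap.comp_smul, LinearMap.smul_comp, smul_smul, LinearMap.comp_assoc]
  rw [← LinearMap.comp_assoc (C.extMap α σ) (C.invExt τ σ), C.extMap_comp_invExt hb,
    LinearMap.id_comp, ← neg_smul]
  congr 1
  linear_combination (-(pathSign F ((σ, τ) :: l) * incidence F α σ *
    incidence F (((σ, τ) :: l).getLast (List.cons_ne_nil _ _)).2 ω)) *
      incidence_mul_self (F := F) hfacet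

theorem zigzagTerm_eq_zero_of_not_facet {τ : Finset V} {p : Finset V × Finset V}
    (h : ¬(p.1 ⊆ τ ∧ τ.card = p.1.card + 1)) (ω : Finset V) (l : List (Finset V × Finset V)) :
    zigzagTerm C τ ω p l = 0 := by
  rw [zigzagTerm, show incidence F τ p.1 = 0 from if_neg h, mul_zero, zero_mul, zero_smul]

theorem pathTerm_singleton (α ω σ τ : Finset V) :
    pathTerm C S α ω [(σ, τ)] = (block (totalBoundary C) τ ω).comp
      ((block (matchingInv C S) σ τ).comp (block (totalBoundary C) α σ)) := by
  rw [pathTerm_cons, block_matchingInv, block_totalBoundary, block_totalBoundary]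
  by_cases hστ : (σ, τ) ∈ S.pairs
  · rw [if_pos (isSigmaPath_singleton_iff.2 hστ), if_pos hστ, zigzagTerm]
    simp only [LinearMap.comp_smul, LinearMap.smul_comp, smul_smul, pathSign,
      List.getLast_singleton]
    congr 1
    ring
  · rw [if_neg (fun h => hστ (isSigmaPath_singleton_iff.1 h)), if_neg hστ, LinearMap.zero_comp,
      LinearMap.comp_zero]

/-- Prepending `(σ, τ)` either adds a first step to the path, or, if `q = (σ, τ)`, gives a
non-path whose term cancels the one of `q :: l`. -/
theorem pathTerm_cons_cons (hcomp : S.Compatible C) (α ω σ τ : Finset V)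
    (q : Finset V × Finset V) (l : List (Finset V × Finset V)) :
    pathTerm C S α ω ((σ, τ) :: q :: l) =
      (pathTerm C S τ ω (q :: l)).comp
        ((block (matchingInv C S) σ τ).comp (block (totalBoundary C) α σ)) +
      if q = (σ, τ) then pathTerm C S α ω (q :: l) else 0 := by
  rw [block_matchingInv, block_totalBoundary, pathTerm_cons, pathTerm_cons, pathTerm_cons]
  by_cases hq : IsSigmaPath S (q :: l)
  swap
  · have hpath : ¬IsSigmaPath S ((σ, τ) :: q :: l) := fun h =>
      hq (isSigmaPath_cons_cons_iff.1 h).2.2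
    simp [hpath, hq]
  have hqmem : q ∈ S.pairs := hq.2.1 q List.mem_cons_self
  by_cases hστ : (σ, τ) ∈ S.pairs
  swap
  · have hpath : ¬IsSigmaPath S ((σ, τ) :: q :: l) := fun h => hστ (isSigmaPath_cons_cons_iff.1 h).1
    rw [if_neg hpath, if_neg hστ, if_neg fun (h : q = (σ, τ)) => hστ (h ▸ hqmem)]
    simp
  rw [if_pos hστ, if_pos hq, if_pos hq]
  by_cases hqστ : q = (σ, τ)
  · subst hqστ
    have hpath : ¬IsSigmaPath S ((σ, τ) :: (σ, τ) :: l) := fun h =>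
      (isSigmaPath_cons_cons_iff.1 h).2.1.2.2 rfl
    rw [if_neg hpath, if_pos rfl, zigzagTerm_comp_cancel (hcomp _ hστ) (S.facet _ hστ),
      neg_add_cancel]
  rw [if_neg hqστ, add_zero]
  have hq₁ : q.1 ≠ σ := fun h => hqστ (S.eq_of_fst_eq hqmem hστ h)
  by_cases hfacet : q.1 ⊆ τ ∧ τ.card = q.1.card + 1
  · rw [if_pos (isSigmaPath_cons_cons_iff.2 ⟨hστ, ⟨hfacet.1, hfacet.2, hq₁⟩, hq⟩),
      zigzagTerm_cons]
  · have hpath : ¬IsSigmaPath S ((σ, τ) :: q :: l) := fun h =>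
      hfacet ⟨(isSigmaPath_cons_cons_iff.1 h).2.1.1, (isSigmaPath_cons_cons_iff.1 h).2.1.2.1⟩
    rw [if_neg hpath, zigzagTerm_eq_zero_of_not_facet hfacet, LinearMap.zero_comp]

theorem pathSum_zero (α ω : Finset V) :
    pathSum C S 0 α ω = ∑ σ, ∑ τ, (block (totalBoundary C) τ ω).comp
      ((block (matchingInv C S) σ τ).comp (block (totalBoundary C) α σ)) := by
  rw [pathSum, ← (Equiv.funUnique (Fin 1) _).symm.sum_comp, Fintype.sum_prod_type]
  simp [pathTerm_singleton]

theorem pathSum_succ (hcomp : S.Compatible C) (m : ℕ) (α ω : Finset V) :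
    pathSum C S (m + 1) α ω = ∑ σ, ∑ τ, (pathSum C S m τ ω).comp
      ((block (matchingInv C S) σ τ).comp (block (totalBoundary C) α σ)) + pathSum C S m α ω := by
  have hcons (σ τ : Finset V) (g : Fin (m + 1) → Finset V × Finset V) :
      pathTerm C S α ω ((σ, τ) :: List.ofFn g) = (pathTerm C S τ ω (List.ofFn g)).comp
        ((block (matchingInv C S) σ τ).comp (block (totalBoundary C) α σ)) +
        if g 0 = (σ, τ) then pathTerm C S α ω (List.ofFn g) else 0 := by
    rw [List.ofFn_succ]
    exact pathTerm_cons_cons hcomp α ω σ τ _ _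
  have hhead (g : Fin (m + 1) → Finset V × Finset V) :
      ∑ σ, ∑ τ, (if g 0 = (σ, τ) then pathTerm C S α ω (List.ofFn g) else 0) =
        pathTerm C S α ω (List.ofFn g) := by
    rw [← Fintype.sum_prod_type (fun p => if g 0 = p then pathTerm C S α ω (List.ofFn g) else 0),
      Finset.sum_ite_eq, if_pos (Finset.mem_univ _)]
  calc pathSum C S (m + 1) α ω
      = ∑ σ, ∑ τ, ∑ g : Fin (m + 1) → Finset V × Finset V,
          pathTerm C S α ω ((σ, τ) :: List.ofFn g) := by
        rw [pathSum, ← (Fin.consEquiv fun _ => Finset V × Finset V).sum_comp,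
          Fintype.sum_prod_type, Fintype.sum_prod_type]
        simp [Fin.consEquiv]
    _ = _ := by
        simp only [hcons, Finset.sum_add_distrib, pathSum, LinearMap.sum_comp]
        congr 1
        calc _ = ∑ σ, ∑ g : Fin (m + 1) → Finset V × Finset V, ∑ τ,
              (if g 0 = (σ, τ) then pathTerm C S α ω (List.ofFn g) else 0) :=
              Finset.sum_congr rfl fun σ _ => Finset.sum_comm
          _ = _ := by rw [Finset.sum_comm]; exact Finset.sum_congr rfl fun g _ => hhead g

end PathExpansion

section MorseBlocks

variable {V : Type} [Fintype V] [LinearOrder V] {F : Type} [Field F] {C : Cosheaf F V}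
  {K : SimpComplex V} {S : Matching K}

theorem block_perturbationTerm (hcomp : S.Compatible C) (m : ℕ) (α ω : Finset V) :
    block (totalBoundary C * matchingInv C S * gradientStep C S ^ m * lowerProj C S *
      totalBoundary C) α ω = pathSum C S m α ω := by
  induction m generalizing α with
  | zero =>
    rw [pow_zero, mul_one, mul_assoc (totalBoundary C), matchingInv_mul_lowerProj, block_mul,
      pathSum_zero]
    refine Finset.sum_congr rfl fun σ _ => ?_
    rw [block_mul, LinearMap.sum_comp]
    simp only [LinearMap.comp_assoc]
  | succ m ih =>
    rw [gradientStep, perturbationTerm_succ lowerProj_mul_self matchingInv_mul_lowerProj,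
      ← gradientStep, block_add, ih, pathSum_succ hcomp, block_mul]
    congr 1
    refine Finset.sum_congr rfl fun σ _ => ?_
    rw [block_mul, LinearMap.sum_comp]
    simp only [LinearMap.comp_assoc, ih]

theorem block_morseOp (hacyc : S.Acyclic) (hcomp : S.Compatible C) (α ω : Finset V) :
    block (morseOp C S) α ω = morseBlock C S α ω := by
  have hexpand : totalBoundary C * (matchingInv C S *
      (∑ m ∈ Finset.range (S.pairs.card + 1), gradientStep C S ^ m) * lowerProj C S) *
        totalBoundary C = ∑ m ∈ Finset.range (S.pairs.card + 1), totalBoundary C *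
          matchingInv C S * gradientStep C S ^ m * lowerProj C S * totalBoundary C := by
    simp only [Finset.mul_sum, Finset.sum_mul, mul_assoc]
  rw [morseOp, block_add, hexpand, block_sum, block_totalBoundary, morseBlock_eq_add_sum_pathTerm,
    sum_nodup_eq_sum_range_sum_ofFn _ (S.pairs.card + 1)]
  · simp only [block_perturbationTerm hcomp, pathSum]
  · intro l hl
    by_cases hpath : IsSigmaPath S l
    · exact ⟨hpath.nodup hacyc, hpath.1, (hpath.length_le hacyc).trans (Nat.le_succ _)⟩
    · exact absurd (dif_neg hpath) hl

theorem exists_simplex_of_pathTerm_ne_zero {α ω : Finset V} {l : List (Finset V × Finset V)}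
    (h : pathTerm C S α ω l ≠ 0) : ω.card + 1 = α.card ∧ ∃ τ ∈ K.simplices, ω ⊆ τ := by
  cases l with
  | nil => exact absurd (dif_neg fun hpath => hpath.1 rfl) h
  | cons p l =>
    rw [pathTerm_cons] at h
    split_ifs at h with hpath
    swap; · exact absurd rfl h
    have hτ := hpath.card_getLast
    set τ := ((p :: l).getLast (List.cons_ne_nil p l)).2
    have hfirst : incidence F α p.1 ≠ 0 := fun h0 => h (by rw [zigzagTerm, h0]; simp)
    have hlast : incidence F τ ω ≠ 0 := fun h0 => h (by rw [zigzagTerm, h0]; simp)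
    obtain ⟨-, hα⟩ := facet_of_incidence_ne_zero hfirst
    obtain ⟨hωτ, hτω⟩ := facet_of_incidence_ne_zero hlast
    exact ⟨by omega, τ, S.mem_snd _ (hpath.2.1 _ (List.getLast_mem _)), hωτ⟩

theorem mem_simplices_of_morseBlock_ne_zero {α ω : Finset V} (hα : α ∈ K.simplices)
    (hα₂ : 2 ≤ α.card) (h : morseBlock C S α ω ≠ 0) :
    ω ∈ K.simplices ∧ ω.card + 1 = α.card := by
  suffices ω.card + 1 = α.card ∧ ∃ τ ∈ K.simplices, ω ⊆ τ by
    obtain ⟨hcard, τ, hτ, hωτ⟩ := this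
    exact ⟨K.down_closed τ hτ ω (Finset.card_pos.1 (by omega)) hωτ, hcard⟩
  rw [morseBlock_eq_add_sum_pathTerm] at h
  by_cases hinc : incidence F α ω = 0
  · rw [hinc, zero_smul, zero_add] at h
    obtain ⟨ρ, -, hρ⟩ := Finset.exists_ne_zero_of_sum_ne_zero h
    exact exists_simplex_of_pathTerm_ne_zero hρ
  · obtain ⟨hsub, hcard⟩ := facet_of_incidence_ne_zero hinc
    exact ⟨hcard.symm, α, hα, hsub⟩

theorem sum_morseBlock_comp_morseBlock (hacyc : S.Acyclic) (hcomp : S.Compatible C) {k : ℕ}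
    {α : Finset V} (hα : α ∈ K.simplices) (hcard : α.card = k + 3) (γ : Finset V) :
    ∑ β : critIdx S (k + 1), (morseBlock C S β.1 γ).comp (morseBlock C S α β.1) = 0 := by
  have h := congrArg (fun f => block f α γ) (morseOp_mul_criticalProj_mul_morseOp hacyc hcomp)
  rw [block_mul] at h
  simp only [criticalProj, block_mul_proj, block_morseOp hacyc hcomp, block_zero] at h
  rw [← h, ← Finset.sum_subtype (Finset.univ.filter fun β => (β ∈ K.simplices ∧
    β.card = k + 1 + 1) ∧ S.Critical β) (by simp) fun β =>
      (morseBlock C S β γ).comp (morseBlock C S α β), Finset.sum_filter]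
  refine Finset.sum_congr rfl fun β _ => ?_
  by_cases hβ : S.Critical β
  · by_cases hβK : β ∈ K.simplices ∧ β.card = k + 1 + 1
    · rw [if_pos ⟨hβK, hβ⟩, if_pos hβ]
    · rw [if_neg fun h => hβK h.1, if_pos hβ]
      by_cases hαβ : morseBlock C S α β = 0
      · rw [hαβ, LinearMap.comp_zero]
      · obtain ⟨hβmem, hβcard⟩ := mem_simplices_of_morseBlock_ne_zero hα (by omega) hαβ
        exact absurd ⟨hβmem, by omega⟩ hβK
  · rw [if_neg fun h => hβ h.2, if_neg hβ, LinearMap.zero_comp]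

theorem morseBoundary_eq_ofBlocks (k : ℕ) :
    morseBoundary C S k = ofBlocks fun α ω => morseBlock C S α.1 ω.1 := rfl

end MorseBlocks

section

variable {V : Type} [Fintype V] [LinearOrder V] {F : Type} [Field F]

/-- Let `Σ` be an acyclic partial matching on a finite simplicial
complex `K`, compatible with a cosheaf `𝒞` (each matched extension map `C_{τ▷σ}` is
an isomorphism).  Then the Morse boundary maps satisfy `∂^Σ_k ∘ ∂^Σ_{k+1} = 0`, so
the Morse complex `C^Σ_•(K;𝒞) = ⊕_{α critical} 𝒞_α` is a chain complex. -/
theorem morseBoundary_sq_zero {K : SimpComplex V} (C : Cosheaf F V) (S : Matching K)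
    (hacyc : S.Acyclic) (hcomp : S.Compatible C) (k : ℕ) :
    (morseBoundary C S k).comp (morseBoundary C S (k + 1)) = 0 := by
  rw [morseBoundary_eq_ofBlocks, morseBoundary_eq_ofBlocks, ofBlocks_comp_ofBlocks]
  refine ofBlocks_eq_zero fun α γ => ?_
  exact sum_morseBlock_comp_morseBlock hacyc hcomp α.2.1.1 (by rw [α.2.1.2]) γ.1

end
end

section
/- Let K be a finite simplicial complex with cosheaf C, M ⊆ K a subcomplex, and Σ a C-compatible acyclic partial matching on K compatible with M (for each (σ◁τ) ∈ Σ, σ ∈ M iff τ ∈ M). Then every Σ_M-critical simplex of M is Σ-critical in K, and there are no Σ-paths in K that start at a facet of a simplex of M and end at a simplex τ_m having a facet outside M followed by use in the Morse boundary; consequently the block [α:ω]_Σ vanishes for every critical α ∈ M and critical ω ∈ K∖M, so the inclusion of critical summands defines a chain map ι_•: M_•^M → M_•^K between the Morse complexes. -/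
open Classical DirectSum

noncomputable section

variable {V : Type} [Fintype V] [LinearOrder V] {F : Type} [Field F]

/-- The restriction `Σ_M` of a matching to a subcomplex `M`: the pairs both of
whose constituents lie in `M`. -/
noncomputable def Matching.restrict {K : SimpComplex V} (S : Matching K)
    (M : SimpComplex V) : Matching M where
  pairs := S.pairs.filter fun p => p.1 ∈ M.simplices ∧ p.2 ∈ M.simplices
  mem_fst p hp := ((Finset.mem_filter.mp hp).2).1
  mem_snd p hp := ((Finset.mem_filter.mp hp).2).2
  facet p hp := S.facet p (Finset.mem_filter.mp hp).1
  pairwise_distinct p hp q hq :=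
    S.pairwise_distinct p (Finset.mem_filter.mp hp).1 q (Finset.mem_filter.mp hq).1

end

/- A `Σ`-path alternates `σᵢ ◁ τᵢ ▷ σᵢ₊₁`, so it only moves to faces and to matching partners.
If `Σ` never matches across the boundary of `M`, a path starting in `M` therefore stays in `M`,
and the `Σ_M`-paths are exactly the `Σ`-paths starting in `M`. Since faces of `M`-simplices lie
in `M`, every term of a block `[α:ω]_Σ` with `α ∈ M` that involves a path leaving `M`, or a
final facet `ω ∉ M`, carries a vanishing incidence number. Hence `[α:ω]_{Σ_M} = [α:ω]_Σ` for
`α ∈ M`, and `[α:ω]_Σ = 0` for `ω ∉ M`, which makes the inclusion of critical summands commute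
with the Morse boundaries. -/

def Matching.CompatibleWith {V : Type} [LinearOrder V] {K : SimpComplex V} (S : Matching K)
    (M : SimpComplex V) : Prop :=
  ∀ p ∈ S.pairs, (p.1 ∈ M.simplices ↔ p.2 ∈ M.simplices)

section

variable {V : Type} [LinearOrder V] {F : Type} [Field F] {K M : SimpComplex V}
  {S : Matching K}

theorem SimpComplex.mem_of_subset {σ τ : Finset V} (hτ : τ ∈ K.simplices)
    (hσ : σ ∈ M.simplices) (h : τ ⊆ σ) : τ ∈ M.simplices :=
  M.down_closed σ hσ τ (K.nonempty_mem τ hτ) h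

theorem incidence_eq_zero_of_mem_of_not_mem [Fintype V] {σ τ : Finset V}
    (hσ : σ ∈ M.simplices) (hτK : τ ∈ K.simplices) (hτ : τ ∉ M.simplices) :
    incidence F σ τ = 0 :=
  if_neg fun h => hτ (SimpComplex.mem_of_subset hτK hσ h.1)

theorem Matching.CompatibleWith.critical_of_restrict (hS : S.CompatibleWith M)
    {σ : Finset V} (hσ : σ ∈ M.simplices) (hc : (S.restrict M).Critical σ) :
    S.Critical σ := by
  intro p hp
  constructor
  · rintro rfl
    exact (hc p (Finset.mem_filter.mpr ⟨hp, hσ, (hS p hp).mp hσ⟩)).1 rfl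
  · rintro rfl
    exact (hc p (Finset.mem_filter.mpr ⟨hp, (hS p hp).mpr hσ, hσ⟩)).2 rfl

theorem Matching.Critical.restrict {σ : Finset V} (hc : S.Critical σ) :
    (S.restrict M).Critical σ :=
  fun p hp => hc p (Finset.mem_filter.mp hp).1

namespace IsSigmaPath

variable {l : List (Finset V × Finset V)}

theorem of_restrict (h : IsSigmaPath (S.restrict M) l) : IsSigmaPath S l :=
  ⟨h.1, fun p hp => (Finset.mem_filter.mp (h.2.1 p hp)).1, h.2.2⟩

theorem head_fst_mem (h : IsSigmaPath S l) : (l.head h.1).1 ∈ K.simplices :=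
  S.mem_fst _ (h.2.1 _ (List.head_mem h.1))

theorem mem_of_head_mem (hS : S.CompatibleWith M) (h : IsSigmaPath S l)
    (hhead : (l.head h.1).1 ∈ M.simplices) :
    ∀ p ∈ l, p.1 ∈ M.simplices ∧ p.2 ∈ M.simplices := by
  have hfst : ∀ p ∈ l, p.1 ∈ M.simplices := by
    refine (List.IsChain.iff_mem.mp h.2.2).induction _ _ ?_ fun _ => hhead
    rintro p q ⟨hp, hq, hqp, -⟩ hp1
    exact SimpComplex.mem_of_subset (S.mem_fst q (h.2.1 q hq)) ((hS p (h.2.1 p hp)).mp hp1) hqp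
  exact fun p hp => ⟨hfst p hp, (hS p (h.2.1 p hp)).mp (hfst p hp)⟩

theorem restrict (hS : S.CompatibleWith M) (h : IsSigmaPath S l)
    (hhead : (l.head h.1).1 ∈ M.simplices) : IsSigmaPath (S.restrict M) l :=
  ⟨h.1, fun p hp => Finset.mem_filter.mpr ⟨h.2.1 p hp, h.mem_of_head_mem hS hhead p hp⟩, h.2.2⟩

end IsSigmaPath

variable (hMK : M.Sub K) (hS : S.CompatibleWith M)

abbrev critIdxIncl (k : ℕ) (σ : critIdx (S.restrict M) k) : critIdx S k :=
  ⟨σ.1, ⟨hMK σ.2.1.1, σ.2.1.2⟩, hS.critical_of_restrict σ.2.1.1 σ.2.2⟩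

theorem critIdxIncl_injective (k : ℕ) : Function.Injective (critIdxIncl hMK hS k) :=
  fun _ _ h => Subtype.ext (congrArg (fun ω : critIdx S k => ω.1) h)

theorem mem_range_critIdxIncl {k : ℕ} {ω : critIdx S k} (hω : ω.1 ∈ M.simplices) :
    ω ∈ Set.range (critIdxIncl hMK hS k) :=
  ⟨⟨ω.1, ⟨hω, ω.2.1.2⟩, ω.2.2.restrict⟩, rfl⟩

noncomputable def morseIncl (C : Cosheaf F V) (k : ℕ) :
    MorseChain C (S.restrict M) k →ₗ[F] MorseChain C S k :=
  DirectSum.toModule F _ _ fun σ =>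
    DirectSum.lof F (critIdx S k) (fun ω => C.stalk ω.1) (critIdxIncl hMK hS k σ)

theorem morseIncl_lof (C : Cosheaf F V) (k : ℕ) (σ : critIdx (S.restrict M) k)
    (x : C.stalk σ.1) :
    morseIncl hMK hS C k (DirectSum.lof F _ (fun ω => C.stalk ω.1) σ x) =
      DirectSum.lof F (critIdx S k) (fun ω => C.stalk ω.1) (critIdxIncl hMK hS k σ) x :=
  DirectSum.toModule_lof F _ _

end

noncomputable section

variable {V : Type} [Fintype V] [LinearOrder V] {F : Type} [Field F]

section

variable {K M : SimpComplex V} {S : Matching K}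

theorem morseBlock_restrict (C : Cosheaf F V) (hS : S.CompatibleWith M) {α : Finset V}
    (hα : α ∈ M.simplices) (ω : Finset V) :
    morseBlock C (S.restrict M) α ω = morseBlock C S α ω := by
  unfold morseBlock
  congr 1
  refine Finset.sum_congr rfl fun ρ _ => ?_
  by_cases hres : IsSigmaPath (S.restrict M) ρ.1
  · rw [dif_pos hres, dif_pos hres.of_restrict]
  by_cases hρ : IsSigmaPath S ρ.1
  · have hhead : (ρ.1.head hρ.1).1 ∉ M.simplices := fun hm => hres (hρ.restrict hS hm)
    rw [dif_neg hres, dif_pos hρ,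
      incidence_eq_zero_of_mem_of_not_mem hα hρ.head_fst_mem hhead, mul_zero, zero_mul,
      zero_smul]
  · rw [dif_neg hres, dif_neg hρ]

theorem morseBlock_eq_zero_of_not_mem (C : Cosheaf F V) (hS : S.CompatibleWith M)
    {α ω : Finset V} (hα : α ∈ M.simplices) (hωK : ω ∈ K.simplices)
    (hω : ω ∉ M.simplices) : morseBlock C S α ω = 0 := by
  unfold morseBlock
  rw [incidence_eq_zero_of_mem_of_not_mem hα hωK hω, zero_smul, zero_add]
  refine Finset.sum_eq_zero fun ρ _ => ?_
  by_cases hρ : IsSigmaPath S ρ.1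
  · rw [dif_pos hρ]
    by_cases hhead : (ρ.1.head hρ.1).1 ∈ M.simplices
    · have hlast := (hρ.mem_of_head_mem hS hhead _ (List.getLast_mem hρ.1)).2
      rw [incidence_eq_zero_of_mem_of_not_mem hlast hωK hω, mul_zero, zero_smul]
    · rw [incidence_eq_zero_of_mem_of_not_mem hα hρ.head_fst_mem hhead, mul_zero, zero_mul,
        zero_smul]
  · rw [dif_neg hρ]

theorem morseBoundary_comp_morseIncl (hMK : M.Sub K) (hS : S.CompatibleWith M)
    (C : Cosheaf F V) (k : ℕ) :
    (morseBoundary C S k).comp (morseIncl hMK hS C (k + 1)) =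
      (morseIncl hMK hS C k).comp (morseBoundary C (S.restrict M) k) := by
  refine DirectSum.linearMap_ext F fun α => LinearMap.ext fun x => ?_
  simp only [LinearMap.comp_apply, morseIncl_lof, morseBoundary, DirectSum.toModule_lof,
    LinearMap.sum_apply, map_sum]
  refine (Fintype.sum_of_injective (critIdxIncl hMK hS k) (critIdxIncl_injective hMK hS k)
    (fun ω => DirectSum.lof F _ (fun ω => C.stalk ω.1) (critIdxIncl hMK hS k ω)
      (morseBlock C (S.restrict M) α.1 ω.1 x))
    (fun ω => DirectSum.lof F _ (fun ω => C.stalk ω.1) ω (morseBlock C S α.1 ω.1 x))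
    (fun ω hω => ?_) fun ω => ?_).symm
  · have hωM : ω.1 ∉ M.simplices := fun hm => hω (mem_range_critIdxIncl hMK hS hm)
    rw [morseBlock_eq_zero_of_not_mem C hS α.2.1.1 ω.2.1.1 hωM, LinearMap.zero_apply, map_zero]
  · rw [morseBlock_restrict C hS α.2.1.1]

end

theorem morse_restriction_chainMap_general {K M : SimpComplex V} (C : Cosheaf F V)
    (S : Matching K) (hMK : M.Sub K)
    (hcompat : ∀ p ∈ S.pairs, (p.1 ∈ M.simplices ↔ p.2 ∈ M.simplices)) :
    (∀ σ : Finset V, σ ∈ M.simplices → (S.restrict M).Critical σ → S.Critical σ) ∧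
    (∀ α ω : Finset V, α ∈ M.simplices → S.Critical α →
      ω ∈ K.simplices → ω ∉ M.simplices → S.Critical ω →
        morseBlock C S α ω = 0) ∧
    (∃ ι : ∀ k : ℕ, MorseChain C (S.restrict M) k →ₗ[F] MorseChain C S k,
      (∀ (k : ℕ) (σ : critIdx (S.restrict M) k) (hc : S.Critical σ.1)
        (x : C.stalk σ.1),
          ι k (DirectSum.lof F (critIdx (S.restrict M) k)
            (fun ω => C.stalk ω.1) σ x) =
          DirectSum.lof F (critIdx S k) (fun ω => C.stalk ω.1)
            ⟨σ.1, ⟨⟨hMK σ.2.1.1, σ.2.1.2⟩, hc⟩⟩ x) ∧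
      (∀ k : ℕ, (morseBoundary C S k).comp (ι (k + 1)) =
        (ι k).comp (morseBoundary C (S.restrict M) k))) :=
  ⟨fun _ => Matching.CompatibleWith.critical_of_restrict hcompat,
    fun _ _ hα _ hωK hω _ => morseBlock_eq_zero_of_not_mem C hcompat hα hωK hω,
    morseIncl hMK hcompat C, fun k σ _ x => morseIncl_lof hMK hcompat C k σ x,
    morseBoundary_comp_morseIncl hMK hcompat C⟩

/-- Let `K` be a finite simplicial complex with cosheaf `𝒞`,
`M ⊆ K` a subcomplex, and `Σ` a `𝒞`-compatible acyclic partial matching on `K`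
compatible with `M` (for each `(σ◁τ) ∈ Σ`, `σ ∈ M ↔ τ ∈ M`).  Then every
`Σ_M`-critical simplex of `M` is `Σ`-critical in `K`; the Morse boundary block
`[α:ω]_Σ` vanishes for every critical `α ∈ M` and critical `ω ∈ K ∖ M`; and the
inclusion of critical summands defines a chain map `ι_• : M_•^M → M_•^K` between
the Morse complexes. -/
theorem morse_restriction_chainMap {K M : SimpComplex V} (C : Cosheaf F V)
    (S : Matching K) (hacyc : S.Acyclic) (hcomp : S.Compatible C)
    (hMK : M.Sub K)
    (hcompat : ∀ p ∈ S.pairs, (p.1 ∈ M.simplices ↔ p.2 ∈ M.simplices)) :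
    (∀ σ : Finset V, σ ∈ M.simplices → (S.restrict M).Critical σ → S.Critical σ) ∧
    (∀ α ω : Finset V, α ∈ M.simplices → S.Critical α →
      ω ∈ K.simplices → ω ∉ M.simplices → S.Critical ω →
        morseBlock C S α ω = 0) ∧
    (∃ ι : ∀ k : ℕ, MorseChain C (S.restrict M) k →ₗ[F] MorseChain C S k,
      (∀ (k : ℕ) (σ : critIdx (S.restrict M) k) (hc : S.Critical σ.1)
        (x : C.stalk σ.1),
          ι k (DirectSum.lof F (critIdx (S.restrict M) k)
            (fun ω => C.stalk ω.1) σ x) =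
          DirectSum.lof F (critIdx S k) (fun ω => C.stalk ω.1)
            ⟨σ.1, ⟨⟨hMK σ.2.1.1, σ.2.1.2⟩, hc⟩⟩ x) ∧
      (∀ k : ℕ, (morseBoundary C S k).comp (ι (k + 1)) =
        (ι k).comp (morseBoundary C (S.restrict M) k))) :=
  morse_restriction_chainMap_general C S hMK hcompat

end
end

section
/- Let K = L ∪ M with I = L ∩ M, C a cosheaf on K, and Σ an acyclic partial matching compatible with C and with both subcomplexes L and M. Then 0 → M_•^I → M_•^L ⊕ M_•^M → M_•^K → 0, with maps ι^{I,L}⊕ι^{I,M} and ι^{L,K}⊕(−ι^{M,K}) induced by inclusions of critical simplices, is a short exact sequence of chain complexes (the Morse Mayer–Vietoris sequence). -/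
open Classical DirectSum

noncomputable section

variable {V : Type} [Fintype V] [LinearOrder V] {F : Type} [Field F]

/-!
A simplex of `L` critical for `Σ` is critical for `Σ_L`, and conversely, because every matched
pair meeting `L` lies in `L`. So `M_•^L` is the sub-sum of `M_•^K` over the critical simplices of
`L`, and likewise for `M` and `I`; the Mayer–Vietoris sequence is then exact degreewise for the same
reason as for direct sums indexed by `L ∪ M` and `L ∩ M`. The inclusions are chain maps because a
`Σ`-path starting at a facet of a simplex of `L` stays in `L`: each pair it passes through has its
lower simplex in `L`, hence is matched inside `L`. Thus Morse blocks out of `L` agree for `Σ_L` and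
`Σ`, and vanish towards simplices outside `L`.
-/

lemma subset_of_incidence_ne_zero {α σ : Finset V} (h : incidence F α σ ≠ 0) : σ ⊆ α := by
  by_contra hσ
  exact h (if_neg fun h' => hσ h'.1)

lemma Matching.mem_restrict_pairs {K N : SimpComplex V} {S : Matching K}
    {p : Finset V × Finset V} :
    p ∈ (S.restrict N).pairs ↔ p ∈ S.pairs ∧ p.1 ∈ N.simplices ∧ p.2 ∈ N.simplices :=
  Finset.mem_filter

structure Matching.IsClosedRestriction {K₁ K₂ : SimpComplex V} (S₁ : Matching K₁)
    (S₂ : Matching K₂) : Prop where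
  pairs_subset : S₁.pairs ⊆ S₂.pairs
  sub : K₁.Sub K₂
  mem_of_fst_mem : ∀ p ∈ S₂.pairs, p.1 ∈ K₁.simplices → p ∈ S₁.pairs
  mem_of_snd_mem : ∀ p ∈ S₂.pairs, p.2 ∈ K₁.simplices → p ∈ S₁.pairs

lemma Matching.isClosedRestriction_restrict {K N : SimpComplex V} (S : Matching K)
    (hN : N.Sub K) (h : ∀ p ∈ S.pairs, (p.1 ∈ N.simplices ↔ p.2 ∈ N.simplices)) :
    (S.restrict N).IsClosedRestriction S where
  pairs_subset _ hp := (mem_restrict_pairs.mp hp).1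
  sub := hN
  mem_of_fst_mem p hp h1 := mem_restrict_pairs.mpr ⟨hp, h1, (h p hp).mp h1⟩
  mem_of_snd_mem p hp h2 := mem_restrict_pairs.mpr ⟨hp, (h p hp).mpr h2, h2⟩

lemma Matching.isClosedRestriction_restrict_restrict {K N N' : SimpComplex V} (S : Matching K)
    (hN : N.Sub N') (h : ∀ p ∈ S.pairs, (p.1 ∈ N.simplices ↔ p.2 ∈ N.simplices)) :
    (S.restrict N).IsClosedRestriction (S.restrict N') where
  pairs_subset p hp := by
    obtain ⟨hp, h1, h2⟩ := mem_restrict_pairs.mp hp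
    exact mem_restrict_pairs.mpr ⟨hp, hN h1, hN h2⟩
  sub := hN
  mem_of_fst_mem p hp h1 := by
    have hp := (mem_restrict_pairs.mp hp).1
    exact mem_restrict_pairs.mpr ⟨hp, h1, (h p hp).mp h1⟩
  mem_of_snd_mem p hp h2 := by
    have hp := (mem_restrict_pairs.mp hp).1
    exact mem_restrict_pairs.mpr ⟨hp, (h p hp).mpr h2, h2⟩

lemma component_morseBoundary_lof (C : Cosheaf F V) {K : SimpComplex V} (S : Matching K) {k : ℕ}
    (α : critIdx S (k + 1)) (ω : critIdx S k) (x : C.stalk α.1) :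
    DirectSum.component F (critIdx S k) (fun τ => C.stalk τ.1) ω
        (morseBoundary C S k (DirectSum.lof F (critIdx S (k + 1)) (fun τ => C.stalk τ.1) α x)) =
      morseBlock C S α.1 ω.1 x := by
  rw [morseBoundary, DirectSum.toModule_lof, LinearMap.sum_apply, map_sum]
  rw [Finset.sum_eq_single_of_mem ω (Finset.mem_univ ω)]
  · rw [LinearMap.comp_apply, DirectSum.component.lof_self]
  · intro ω' _ hne
    rw [LinearMap.comp_apply, DirectSum.component.of, dif_neg hne]

namespace Matching.IsClosedRestriction

variable {K₁ K₂ K₃ : SimpComplex V} {S₁ : Matching K₁} {S₂ : Matching K₂} {S₃ : Matching K₃}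
  (T : S₁.IsClosedRestriction S₂) (C : Cosheaf F V)

include T

lemma trans (T' : S₂.IsClosedRestriction S₃) : S₁.IsClosedRestriction S₃ where
  pairs_subset := T.pairs_subset.trans T'.pairs_subset
  sub := T.sub.trans T'.sub
  mem_of_fst_mem p hp h1 := T.mem_of_fst_mem p (T'.mem_of_fst_mem p hp (T.sub h1)) h1
  mem_of_snd_mem p hp h2 := T.mem_of_snd_mem p (T'.mem_of_snd_mem p hp (T.sub h2)) h2

lemma critical_iff {σ : Finset V} (hσ : σ ∈ K₁.simplices) : S₁.Critical σ ↔ S₂.Critical σ := by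
  refine ⟨fun hc p hp => ⟨fun h => ?_, fun h => ?_⟩, fun hc p hp => hc p (T.pairs_subset hp)⟩
  · exact (hc p (T.mem_of_fst_mem p hp (h ▸ hσ))).1 h
  · exact (hc p (T.mem_of_snd_mem p hp (h ▸ hσ))).2 h

lemma isSigmaPath_right {l : List (Finset V × Finset V)} (h : IsSigmaPath S₁ l) :
    IsSigmaPath S₂ l :=
  ⟨h.1, fun p hp => T.pairs_subset (h.2.1 p hp), h.2.2⟩

lemma isSigmaPath_left_of_head_mem : ∀ {l : List (Finset V × Finset V)} (h : IsSigmaPath S₂ l),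
    (l.head h.1).1 ∈ K₁.simplices → IsSigmaPath S₁ l
  | [], h, _ => absurd rfl h.1
  | [p], h, hp =>
      ⟨h.1, by simpa using T.mem_of_fst_mem p (h.2.1 p (by simp)) hp, List.isChain_singleton p⟩
  | p :: q :: l, h, hp => by
      have hp₁ : p ∈ S₁.pairs := T.mem_of_fst_mem p (h.2.1 p (by simp)) hp
      obtain ⟨hpq, htail⟩ := List.isChain_cons_cons.mp h.2.2
      have hq : q.1 ∈ K₁.simplices :=
        K₁.down_closed p.2 (S₁.mem_snd p hp₁) q.1
          (K₂.nonempty_mem q.1 (S₂.mem_fst q (h.2.1 q (by simp)))) hpq.1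
      have ih := isSigmaPath_left_of_head_mem (l := q :: l)
        ⟨by simp, fun r hr => h.2.1 r (List.mem_cons_of_mem p hr), htail⟩ hq
      exact ⟨h.1, List.forall_mem_cons.mpr ⟨hp₁, ih.2.1⟩,
        List.isChain_cons_cons.mpr ⟨hpq, ih.2.2⟩⟩

lemma isSigmaPath_left_of_head_subset {α : Finset V} (hα : α ∈ K₁.simplices)
    {l : List (Finset V × Finset V)} (h : IsSigmaPath S₂ l) (hsub : (l.head h.1).1 ⊆ α) :
    IsSigmaPath S₁ l :=
  T.isSigmaPath_left_of_head_mem h <| K₁.down_closed α hα _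
    (K₂.nonempty_mem _ (S₂.mem_fst _ (h.2.1 _ (List.head_mem h.1)))) hsub

lemma morseBlock_eq {α : Finset V} (hα : α ∈ K₁.simplices) (ω : Finset V) :
    morseBlock C S₁ α ω = morseBlock C S₂ α ω := by
  refine congrArg _ (Finset.sum_congr rfl fun ρ _ => ?_)
  by_cases h₁ : IsSigmaPath S₁ ρ.1
  · rw [dif_pos h₁, dif_pos (T.isSigmaPath_right h₁)]
  rw [dif_neg h₁]
  by_cases h₂ : IsSigmaPath S₂ ρ.1
  · have hinc : incidence F α (ρ.1.head h₂.1).1 = 0 := by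
      by_contra hne
      exact h₁ (T.isSigmaPath_left_of_head_subset hα h₂ (subset_of_incidence_ne_zero hne))
    rw [dif_pos h₂, hinc, mul_zero, zero_mul, zero_smul]
  · rw [dif_neg h₂]

lemma morseBlock_eq_zero {α ω : Finset V} (hα : α ∈ K₁.simplices) (hω : ω.Nonempty)
    (hωK : ω ∉ K₁.simplices) : morseBlock C S₂ α ω = 0 := by
  have not_face : ∀ β ∈ K₁.simplices, incidence F β ω = 0 := fun β hβ => by
    by_contra hne
    exact hωK (K₁.down_closed β hβ ω hω (subset_of_incidence_ne_zero hne))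
  rw [morseBlock, not_face α hα, zero_smul, zero_add]
  refine Finset.sum_eq_zero fun ρ _ => ?_
  by_cases h₂ : IsSigmaPath S₂ ρ.1
  · rw [dif_pos h₂]
    by_cases hinc : incidence F α (ρ.1.head h₂.1).1 = 0
    · rw [hinc, mul_zero, zero_mul, zero_smul]
    have h₁ := T.isSigmaPath_left_of_head_subset hα h₂ (subset_of_incidence_ne_zero hinc)
    have hlast : (ρ.1.getLast h₂.1).2 ∈ K₁.simplices :=
      S₁.mem_snd _ (h₁.2.1 _ (List.getLast_mem h₂.1))
    rw [not_face _ hlast, mul_zero, zero_smul]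
  · rw [dif_neg h₂]

abbrev critEmb {k : ℕ} (σ : critIdx S₁ k) : critIdx S₂ k :=
  ⟨σ.1, ⟨T.sub σ.2.1.1, σ.2.1.2⟩, (T.critical_iff σ.2.1.1).mp σ.2.2⟩

abbrev critRestrict {k : ℕ} (σ : critIdx S₂ k) (hσ : σ.1 ∈ K₁.simplices) : critIdx S₁ k :=
  ⟨σ.1, ⟨hσ, σ.2.1.2⟩, (T.critical_iff hσ).mpr σ.2.2⟩

def incl (k : ℕ) : MorseChain C S₁ k →ₗ[F] MorseChain C S₂ k :=
  DirectSum.toModule F _ _ fun σ => DirectSum.lof F _ (fun τ => C.stalk τ.1) (T.critEmb σ)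

lemma incl_lof {k : ℕ} (σ : critIdx S₁ k) (x : C.stalk σ.1) :
    T.incl C k (DirectSum.lof F _ (fun τ => C.stalk τ.1) σ x) =
      DirectSum.lof F _ (fun τ => C.stalk τ.1) (T.critEmb σ) x := by
  rw [incl, DirectSum.toModule_lof]

lemma incl_incl (T' : S₂.IsClosedRestriction S₃) {k : ℕ} (a : MorseChain C S₁ k) :
    T'.incl C k (T.incl C k a) = (T.trans T').incl C k a := by
  suffices (T'.incl C k).comp (T.incl C k) = (T.trans T').incl C k from LinearMap.congr_fun this a
  refine DirectSum.linearMap_ext F fun σ => LinearMap.ext fun x => ?_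
  simp only [LinearMap.comp_apply, incl_lof]

lemma component_incl_critEmb {k : ℕ} (σ : critIdx S₁ k) (a : MorseChain C S₁ k) :
    DirectSum.component F _ (fun τ => C.stalk τ.1) (T.critEmb σ) (T.incl C k a) =
      DirectSum.component F _ (fun τ => C.stalk τ.1) σ a := by
  suffices (DirectSum.component F _ (fun τ => C.stalk τ.1) (T.critEmb σ)).comp (T.incl C k) =
      DirectSum.component F _ _ σ from LinearMap.congr_fun this a
  refine DirectSum.linearMap_ext F fun τ => LinearMap.ext fun x => ?_
  simp only [LinearMap.comp_apply, incl_lof]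
  by_cases h : τ = σ
  · subst h
    simp only [DirectSum.component.lof_self]
  · have h' : T.critEmb τ ≠ T.critEmb σ := fun he => h (Subtype.ext (Subtype.mk.inj he))
    rw [DirectSum.component.of, DirectSum.component.of, dif_neg h, dif_neg h']

lemma component_incl_of_not_mem {k : ℕ} (σ : critIdx S₂ k) (hσ : σ.1 ∉ K₁.simplices)
    (a : MorseChain C S₁ k) :
    DirectSum.component F _ (fun τ => C.stalk τ.1) σ (T.incl C k a) = 0 := by
  suffices (DirectSum.component F _ (fun τ => C.stalk τ.1) σ).comp (T.incl C k) = 0 from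
    LinearMap.congr_fun this a
  refine DirectSum.linearMap_ext F fun τ => LinearMap.ext fun x => ?_
  have h : T.critEmb τ ≠ σ := fun he => hσ (he ▸ τ.2.1.1)
  simp only [LinearMap.comp_apply, incl_lof, LinearMap.zero_apply]
  rw [DirectSum.component.of, dif_neg h]

lemma incl_injective (k : ℕ) : Function.Injective (T.incl C k) := fun a b h =>
  DirectSum.ext_component F fun σ => by
    rw [← T.component_incl_critEmb, ← T.component_incl_critEmb, h]

lemma lof_mem_range_incl {k : ℕ} (σ : critIdx S₂ k) (hσ : σ.1 ∈ K₁.simplices)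
    (x : C.stalk σ.1) :
    DirectSum.lof F _ (fun τ => C.stalk τ.1) σ x ∈ LinearMap.range (T.incl C k) :=
  ⟨DirectSum.lof F _ (fun τ => C.stalk τ.1) (T.critRestrict σ hσ) x, by rw [incl_lof]⟩

lemma mem_range_incl {k : ℕ} {z : MorseChain C S₂ k}
    (hz : ∀ σ : critIdx S₂ k, σ.1 ∉ K₁.simplices →
      DirectSum.component F _ (fun τ => C.stalk τ.1) σ z = 0) :
    z ∈ LinearMap.range (T.incl C k) := by
  refine DirectSum.sum_univ_of z ▸ Submodule.sum_mem _ fun σ _ => ?_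
  by_cases hσ : σ.1 ∈ K₁.simplices
  · exact T.lof_mem_range_incl C σ hσ _
  · have hzσ : z σ = 0 := hz σ hσ
    rw [hzσ, map_zero]
    exact zero_mem _

lemma incl_morseBoundary (k : ℕ) (a : MorseChain C S₁ (k + 1)) :
    T.incl C k (morseBoundary C S₁ k a) = morseBoundary C S₂ k (T.incl C (k + 1) a) := by
  suffices (T.incl C k).comp (morseBoundary C S₁ k) =
      (morseBoundary C S₂ k).comp (T.incl C (k + 1)) from LinearMap.congr_fun this a
  refine DirectSum.linearMap_ext F fun α => LinearMap.ext fun x =>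
    DirectSum.ext_component F fun ω => ?_
  simp only [LinearMap.comp_apply]
  rw [incl_lof, component_morseBoundary_lof]
  by_cases hω : ω.1 ∈ K₁.simplices
  · obtain ⟨ω, rfl⟩ : ∃ ω₁, T.critEmb ω₁ = ω := ⟨T.critRestrict ω hω, rfl⟩
    rw [component_incl_critEmb, component_morseBoundary_lof]
    exact LinearMap.congr_fun (T.morseBlock_eq C α.2.1.1 ω.1) x
  · have hne : ω.1.Nonempty := Finset.card_pos.mp (by rw [ω.2.1.2]; omega)
    rw [T.component_incl_of_not_mem C ω hω, T.morseBlock_eq_zero C α.2.1.1 hne hω,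
      LinearMap.zero_apply]

end Matching.IsClosedRestriction

section MayerVietoris

open Matching.IsClosedRestriction

variable {K L M I : SimpComplex V} {S : Matching K} {SL : Matching L} {SM : Matching M}
  {SI : Matching I} (C : Cosheaf F V)
  (TL : SL.IsClosedRestriction S) (TM : SM.IsClosedRestriction S)
  (TIL : SI.IsClosedRestriction SL) (TIM : SI.IsClosedRestriction SM)

lemma range_incl_sup_range_incl (hunion : K.simplices = L.simplices ∪ M.simplices) (k : ℕ) :
    LinearMap.range (TL.incl C k) ⊔ LinearMap.range (TM.incl C k) = ⊤ := by
  refine eq_top_iff.mpr fun z _ => ?_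
  rw [← DirectSum.sum_univ_of z]
  refine Submodule.sum_mem _ fun σ _ => ?_
  have hσK : σ.1 ∈ L.simplices ∪ M.simplices := hunion ▸ σ.2.1.1
  rcases Finset.mem_union.mp hσK with hσ | hσ
  · exact Submodule.mem_sup_left (TL.lof_mem_range_incl C σ hσ _)
  · exact Submodule.mem_sup_right (TM.lof_mem_range_incl C σ hσ _)

lemma range_incl_prod_incl_eq_ker (hinter : I.simplices = L.simplices ∩ M.simplices) (k : ℕ) :
    LinearMap.range ((TIL.incl C k).prod (TIM.incl C k)) =
      LinearMap.ker ((TL.incl C k).coprod (-TM.incl C k)) := by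
  apply le_antisymm
  · rintro _ ⟨c, rfl⟩
    simp only [LinearMap.mem_ker, LinearMap.prod_apply, Function.prod_apply, LinearMap.coprod_apply,
      LinearMap.neg_apply, incl_incl, add_neg_eq_zero]
  · rintro ⟨a, b⟩ hab
    have hab : TL.incl C k a = TM.incl C k b := add_neg_eq_zero.mp hab
    obtain ⟨c, rfl⟩ : a ∈ LinearMap.range (TIL.incl C k) := TIL.mem_range_incl C fun σ hσ => by
      have hσM : σ.1 ∉ M.simplices := fun h => hσ (hinter ▸ Finset.mem_inter.mpr ⟨σ.2.1.1, h⟩)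
      rw [← TL.component_incl_critEmb, hab, TM.component_incl_of_not_mem C _ hσM]
    refine ⟨c, Prod.ext rfl (TM.incl_injective C k ?_)⟩
    simp only [LinearMap.prod_apply, Function.prod_apply, incl_incl, ← hab]

end MayerVietoris

theorem morse_mayerVietoris_ses_general {K L M I : SimpComplex V} (C : Cosheaf F V)
    (S : Matching K)
    (hLK : L.Sub K) (hMK : M.Sub K) (hIL : I.Sub L) (hIM : I.Sub M)
    (hunion : K.simplices = L.simplices ∪ M.simplices)
    (hinter : I.simplices = L.simplices ∩ M.simplices)
    (hcompatL : ∀ p ∈ S.pairs, (p.1 ∈ L.simplices ↔ p.2 ∈ L.simplices))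
    (hcompatM : ∀ p ∈ S.pairs, (p.1 ∈ M.simplices ↔ p.2 ∈ M.simplices)) :
    ∃ (p : ∀ k : ℕ, MorseChain C (S.restrict I) k →ₗ[F]
          MorseChain C (S.restrict L) k × MorseChain C (S.restrict M) k)
      (q : ∀ k : ℕ, MorseChain C (S.restrict L) k × MorseChain C (S.restrict M) k →ₗ[F]
          MorseChain C S k),
      -- `p` is the pair of inclusions of critical summands
      (∀ (k : ℕ) (σ : critIdx (S.restrict I) k)
        (hL : σ.1 ∈ L.simplices) (hcL : (S.restrict L).Critical σ.1)
        (hM : σ.1 ∈ M.simplices) (hcM : (S.restrict M).Critical σ.1)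
        (x : C.stalk σ.1),
          p k (DirectSum.lof F (critIdx (S.restrict I) k) (fun ω => C.stalk ω.1) σ x) =
            (DirectSum.lof F (critIdx (S.restrict L) k) (fun ω => C.stalk ω.1)
              ⟨σ.1, ⟨⟨hL, σ.2.1.2⟩, hcL⟩⟩ x,
             DirectSum.lof F (critIdx (S.restrict M) k) (fun ω => C.stalk ω.1)
              ⟨σ.1, ⟨⟨hM, σ.2.1.2⟩, hcM⟩⟩ x)) ∧
      -- `q` is the difference of the two inclusions of critical summands
      (∀ (k : ℕ) (σ : critIdx (S.restrict L) k) (hc : S.Critical σ.1)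
        (x : C.stalk σ.1),
          q k (DirectSum.lof F (critIdx (S.restrict L) k) (fun ω => C.stalk ω.1) σ x, 0) =
            DirectSum.lof F (critIdx S k) (fun ω => C.stalk ω.1)
              ⟨σ.1, ⟨⟨hLK σ.2.1.1, σ.2.1.2⟩, hc⟩⟩ x) ∧
      (∀ (k : ℕ) (σ : critIdx (S.restrict M) k) (hc : S.Critical σ.1)
        (x : C.stalk σ.1),
          q k (0, DirectSum.lof F (critIdx (S.restrict M) k) (fun ω => C.stalk ω.1) σ x) =
            - DirectSum.lof F (critIdx S k) (fun ω => C.stalk ω.1)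
              ⟨σ.1, ⟨⟨hMK σ.2.1.1, σ.2.1.2⟩, hc⟩⟩ x) ∧
      -- `p` and `q` are chain maps
      (∀ k : ℕ, (p k).comp (morseBoundary C (S.restrict I) k) =
        ((morseBoundary C (S.restrict L) k).prodMap
          (morseBoundary C (S.restrict M) k)).comp (p (k + 1))) ∧
      (∀ k : ℕ, (q k).comp
          ((morseBoundary C (S.restrict L) k).prodMap (morseBoundary C (S.restrict M) k)) =
        (morseBoundary C S k).comp (q (k + 1))) ∧
      -- short exactness in every degree
      (∀ k : ℕ, Function.Injective (p k)) ∧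
      (∀ k : ℕ, Function.Surjective (q k)) ∧
      (∀ k : ℕ, LinearMap.range (p k) = LinearMap.ker (q k)) := by
  have hcompatI : ∀ p ∈ S.pairs, (p.1 ∈ I.simplices ↔ p.2 ∈ I.simplices) := fun p hp => by
    simp only [hinter, Finset.mem_inter, hcompatL p hp, hcompatM p hp]
  have TL := S.isClosedRestriction_restrict hLK hcompatL
  have TM := S.isClosedRestriction_restrict hMK hcompatM
  have TIL := S.isClosedRestriction_restrict_restrict hIL hcompatI
  have TIM := S.isClosedRestriction_restrict_restrict hIM hcompatI
  refine ⟨fun k => (TIL.incl C k).prod (TIM.incl C k),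
    fun k => (TL.incl C k).coprod (-TM.incl C k), ?_, ?_, ?_, ?_, ?_, ?_, ?_, ?_⟩
  · intro k σ _ _ _ _ x
    exact Prod.ext (TIL.incl_lof C σ x) (TIM.incl_lof C σ x)
  · intro k σ _ x
    simpa using TL.incl_lof C σ x
  · intro k σ _ x
    simpa using TM.incl_lof C σ x
  · exact fun k => LinearMap.ext fun c =>
      Prod.ext (TIL.incl_morseBoundary C k c) (TIM.incl_morseBoundary C k c)
  · refine fun k => LinearMap.ext fun c => ?_
    simp only [LinearMap.comp_apply, LinearMap.prodMap_apply, LinearMap.coprod_apply,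
      LinearMap.neg_apply, map_add, map_neg, TL.incl_morseBoundary, TM.incl_morseBoundary]
  · exact fun k c c' h => TIL.incl_injective C k (congrArg Prod.fst h)
  · intro k
    rw [← LinearMap.range_eq_top, LinearMap.range_coprod, LinearMap.range_neg]
    exact range_incl_sup_range_incl C TL TM hunion k
  · exact range_incl_prod_incl_eq_ker C TL TM TIL TIM hinter

/-- (Morse Mayer–Vietoris short exact sequence.)  Let `K = L ∪ M`
with `I = L ∩ M`, `𝒞` a cosheaf on `K`, and `Σ` an acyclic partial matching
compatible with `𝒞` and with both subcomplexes `L` and `M`.  Then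
`0 → M_•^I → M_•^L ⊕ M_•^M → M_•^K → 0`, with maps `ι^{I,L} ⊕ ι^{I,M}` and
`ι^{L,K} ⊕ (−ι^{M,K})` induced by inclusions of critical simplices, is a short
exact sequence of chain complexes. -/
theorem morse_mayerVietoris_ses {K L M I : SimpComplex V} (C : Cosheaf F V)
    (S : Matching K) (hacyc : S.Acyclic) (hcomp : S.Compatible C)
    (hLK : L.Sub K) (hMK : M.Sub K) (hIL : I.Sub L) (hIM : I.Sub M)
    (hunion : K.simplices = L.simplices ∪ M.simplices)
    (hinter : I.simplices = L.simplices ∩ M.simplices)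
    (hcompatL : ∀ p ∈ S.pairs, (p.1 ∈ L.simplices ↔ p.2 ∈ L.simplices))
    (hcompatM : ∀ p ∈ S.pairs, (p.1 ∈ M.simplices ↔ p.2 ∈ M.simplices)) :
    ∃ (p : ∀ k : ℕ, MorseChain C (S.restrict I) k →ₗ[F]
          MorseChain C (S.restrict L) k × MorseChain C (S.restrict M) k)
      (q : ∀ k : ℕ, MorseChain C (S.restrict L) k × MorseChain C (S.restrict M) k →ₗ[F]
          MorseChain C S k),
      -- `p` is the pair of inclusions of critical summands
      (∀ (k : ℕ) (σ : critIdx (S.restrict I) k)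
        (hL : σ.1 ∈ L.simplices) (hcL : (S.restrict L).Critical σ.1)
        (hM : σ.1 ∈ M.simplices) (hcM : (S.restrict M).Critical σ.1)
        (x : C.stalk σ.1),
          p k (DirectSum.lof F (critIdx (S.restrict I) k) (fun ω => C.stalk ω.1) σ x) =
            (DirectSum.lof F (critIdx (S.restrict L) k) (fun ω => C.stalk ω.1)
              ⟨σ.1, ⟨⟨hL, σ.2.1.2⟩, hcL⟩⟩ x,
             DirectSum.lof F (critIdx (S.restrict M) k) (fun ω => C.stalk ω.1)
              ⟨σ.1, ⟨⟨hM, σ.2.1.2⟩, hcM⟩⟩ x)) ∧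
      -- `q` is the difference of the two inclusions of critical summands
      (∀ (k : ℕ) (σ : critIdx (S.restrict L) k) (hc : S.Critical σ.1)
        (x : C.stalk σ.1),
          q k (DirectSum.lof F (critIdx (S.restrict L) k) (fun ω => C.stalk ω.1) σ x, 0) =
            DirectSum.lof F (critIdx S k) (fun ω => C.stalk ω.1)
              ⟨σ.1, ⟨⟨hLK σ.2.1.1, σ.2.1.2⟩, hc⟩⟩ x) ∧
      (∀ (k : ℕ) (σ : critIdx (S.restrict M) k) (hc : S.Critical σ.1)
        (x : C.stalk σ.1),
          q k (0, DirectSum.lof F (critIdx (S.restrict M) k) (fun ω => C.stalk ω.1) σ x) =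
            - DirectSum.lof F (critIdx S k) (fun ω => C.stalk ω.1)
              ⟨σ.1, ⟨⟨hMK σ.2.1.1, σ.2.1.2⟩, hc⟩⟩ x) ∧
      -- `p` and `q` are chain maps
      (∀ k : ℕ, (p k).comp (morseBoundary C (S.restrict I) k) =
        ((morseBoundary C (S.restrict L) k).prodMap
          (morseBoundary C (S.restrict M) k)).comp (p (k + 1))) ∧
      (∀ k : ℕ, (q k).comp
          ((morseBoundary C (S.restrict L) k).prodMap (morseBoundary C (S.restrict M) k)) =
        (morseBoundary C S k).comp (q (k + 1))) ∧
      -- short exactness in every degree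
      (∀ k : ℕ, Function.Injective (p k)) ∧
      (∀ k : ℕ, Function.Surjective (q k)) ∧
      (∀ k : ℕ, LinearMap.range (p k) = LinearMap.ker (q k)) :=
  morse_mayerVietoris_ses_general C S hLK hMK hIL hIM hunion hinter hcompatL hcompatM

end
end

section
/- Let P be a finite poset and C: (P,≤)^op → Vect_F^fd. Define G(U) := colim over the diagram with objects C_q for q ∈ U and morphisms C_{q≥q'}: C_q → C_{q'} whenever q ≥ q' in U, for each Alexandrov-open U ⊆ P. Then for every open U, the diagram ⊕_{x,y∈U} G(U_x ∩ U_y) ⇉ ⊕_{p∈U} G(U_p) → G(U) is a coequalizer in Vect_F^fd; i.e., G satisfies the cosheaf condition for the covering of U by open stars. -/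
open CategoryTheory TopologicalSpace Opposite

noncomputable section

/-- The Alexandrov topology on a poset `P`: the open sets are exactly the
up-closed (upper) sets. -/
def alexandrov (P : Type*) [Preorder P] : TopologicalSpace P where
  IsOpen U := IsUpperSet U
  isOpen_univ := isUpperSet_univ
  isOpen_inter _ _ h1 h2 := h1.inter h2
  isOpen_sUnion _ h := isUpperSet_sUnion h

variable (P : Type) [PartialOrder P]

/-- We regard every poset as a topological space via the Alexandrov topology. -/
instance alexandrovSpace : TopologicalSpace P := alexandrov P

/-- The open star `U_p = {x : p ≤ x}` as an open set of the Alexandrov topology. -/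
def openStar (p : P) : Opens P :=
  ⟨Set.Ici p, by exact isUpperSet_Ici p⟩

/-- The open-star inclusion functor `i : (P,≤)ᵒᵖ ⥤ Open(P_Alex)`, `p ↦ U_p`,
sending each relation `p ≤ q` to the inclusion `U_q ⊆ U_p`. -/
def starFunctor : Pᵒᵖ ⥤ Opens P where
  obj X := openStar P X.unop
  map {X Y} f := homOfLE (fun x hx => le_trans (leOfHom f.unop) hx)
  map_id _ := rfl
  map_comp _ _ := rfl

end

open CategoryTheory.Limits

noncomputable section

variable (F : Type) [Field F] (P : Type) [Finite P] [PartialOrder P]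

/-- Every open set of the Alexandrov topology on a poset is an upper set,
hence contains the open star of each of its points. -/
lemma openStar_le (U : Opens P) {p : P} (hp : p ∈ U) : openStar P p ≤ U :=
  fun _ hx => U.is_open' hx hp

/-- Index of the pairwise-intersection summands for the cover of `U` by open stars. -/
abbrev pairIdx (U : Opens P) : Type := {z : P × P // z.1 ∈ U ∧ z.2 ∈ U}

/-- Index of the open-star summands for the cover of `U` by open stars. -/
abbrev starIdx (U : Opens P) : Type := {p : P // p ∈ U}

noncomputable instance (U : Opens P) : Fintype (pairIdx P U) := Fintype.ofFinite _
noncomputable instance (U : Opens P) : Fintype (starIdx P U) := Fintype.ofFinite _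

variable (G : Opens P ⥤ ModuleCat F) (U : Opens P)

/-- `⊕_{x,y ∈ U} G(U_x ∩ U_y)`. -/
abbrev interSum : ModuleCat F :=
  ⨁ fun z : pairIdx P U => G.obj (openStar P z.1.1 ⊓ openStar P z.1.2)

/-- `⊕_{p ∈ U} G(U_p)`. -/
abbrev starSum : ModuleCat F := ⨁ fun p : starIdx P U => G.obj (openStar P p.1)

/-- The first parallel map, induced by the inclusions `U_x ∩ U_y ⊆ U_x`. -/
def leftMap : interSum F P G U ⟶ starSum F P G U :=
  biproduct.desc fun z =>
    G.map (homOfLE inf_le_left) ≫ biproduct.ι (fun p : starIdx P U => G.obj (openStar P p.1)) ⟨z.1.1, z.2.1⟩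

/-- The second parallel map, induced by the inclusions `U_x ∩ U_y ⊆ U_y`. -/
def rightMap : interSum F P G U ⟶ starSum F P G U :=
  biproduct.desc fun z =>
    G.map (homOfLE inf_le_right) ≫ biproduct.ι (fun p : starIdx P U => G.obj (openStar P p.1)) ⟨z.1.2, z.2.2⟩

/-- The structure map `⊕_{p ∈ U} G(U_p) → G(U)`, induced by the inclusions `U_p ⊆ U`. -/
def sumToTotal : starSum F P G U ⟶ G.obj U :=
  biproduct.desc fun p => G.map (homOfLE (openStar_le P U p.2))

/-!
`G(U)` is the colimit of the `C(q)`, `q ∈ U`, and `α` factors each structure map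
`C(q) → G(U)` through `G(U_q)`; hence `⊕_{p ∈ U} G(U_p) → G(U)` is epi. Conversely, a map
`t` out of `⊕_{p ∈ U} G(U_p)` equalizing the two parallel maps is, on the summand `(p, q)`
with `p ≤ q` (where `U_p ∩ U_q = U_q`), compatible with the inclusion `U_q ⊆ U_p`; composing
its components with `α` gives a cocone on the diagram of the `C(q)`, whose induced map
`G(U) → T` recovers `t`.
-/

section

variable {F P G U}

lemma mem_of_openStar_le {Q : Type} [PartialOrder Q] {W : Opens Q} {p : Q}
    (h : openStar Q p ≤ W) : p ∈ W :=
  h (le_refl p)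

section Gluing

variable {Q : Type} [PartialOrder Q] {D : Type*} [Category D] {E : Opens Q ⥤ D}
  {C : Qᵒᵖ ⥤ D} {α : C ⟶ starFunctor Q ⋙ E} {W : Opens Q} {T : D}

lemma hom_ext_of_map_openStar_comp_eq
    (hE : (Functor.LeftExtension.mk E α).IsPointwiseLeftKanExtension) {u v : E.obj W ⟶ T}
    (h : ∀ p (φ : openStar Q p ⟶ W), E.map φ ≫ u = E.map φ ≫ v) : u = v :=
  (hE W).hom_ext' fun X φ => congrArg (α.app X ≫ ·) (h X.unop φ)

variable (C α)

def starCocone (s : ∀ p ∈ W, E.obj (openStar Q p) ⟶ T)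
    (hs : ∀ p q (hp : p ∈ W) (hq : q ∈ W) (φ : openStar Q q ⟶ openStar Q p),
      E.map φ ≫ s p hp = s q hq) :
    Cocone (CostructuredArrow.proj (starFunctor Q) W ⋙ C) where
  pt := T
  ι :=
    { app := fun f => α.app f.left ≫ s f.left.unop (mem_of_openStar_le (leOfHom f.hom))
      naturality := fun f f' φ => by
        change C.map φ.left ≫ α.app f'.left ≫ _ = (α.app f.left ≫ _) ≫ 𝟙 T
        rw [Category.comp_id]
        erw [reassoc_of% (α.naturality φ.left)]
        exact congrArg (α.app f.left ≫ ·) (hs _ _ _ _ _) }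

variable {C α}

lemma exists_map_openStar_comp_eq
    (hE : (Functor.LeftExtension.mk E α).IsPointwiseLeftKanExtension)
    (s : ∀ p ∈ W, E.obj (openStar Q p) ⟶ T)
    (hs : ∀ p q (hp : p ∈ W) (hq : q ∈ W) (φ : openStar Q q ⟶ openStar Q p),
      E.map φ ≫ s p hp = s q hq) :
    ∃ u : E.obj W ⟶ T,
      ∀ p (φ : openStar Q p ⟶ W), E.map φ ≫ u = s p (mem_of_openStar_le (leOfHom φ)) := by
  have hW : IsColimit ((Functor.LeftExtension.mk E α).coconeAt W) := hE W
  let u : E.obj W ⟶ T := hW.desc (starCocone C α s hs)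
  refine ⟨u, fun p φ => (hE (openStar Q p)).hom_ext' fun X ψ => ?_⟩
  have hfac : (α.app X ≫ E.map (ψ ≫ φ)) ≫ u = α.app X ≫ s X.unop _ :=
    hW.fac (starCocone C α s hs) (.mk (ψ ≫ φ))
  change α.app X ≫ E.map ψ ≫ E.map φ ≫ u = α.app X ≫ E.map ψ ≫ s p _
  rw [← E.map_comp_assoc, ← Category.assoc, hfac]
  exact congrArg (α.app X ≫ ·) (hs _ _ _ _ ψ).symm

end Gluing

lemma leftMap_comp_sumToTotal :
    leftMap F P G U ≫ sumToTotal F P G U = rightMap F P G U ≫ sumToTotal F P G U := by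
  refine biproduct.hom_ext' _ _ fun z => ?_
  simp only [leftMap, rightMap, sumToTotal, biproduct.ι_desc_assoc, Category.assoc,
    biproduct.ι_desc, ← G.map_comp]
  rfl

lemma ι_sumToTotal_comp (p : starIdx P U) {T : ModuleCat F} (u : G.obj U ⟶ T) :
    biproduct.ι (fun r : starIdx P U => G.obj (openStar P r.1)) p ≫ sumToTotal F P G U ≫ u =
      G.map (homOfLE (openStar_le P U p.2)) ≫ u :=
  biproduct.ι_desc_assoc _ _ _

variable (U) in
lemma epi_sumToTotal {C : Pᵒᵖ ⥤ ModuleCat F} {α : C ⟶ starFunctor P ⋙ G}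
    (hG : (Functor.LeftExtension.mk G α).IsPointwiseLeftKanExtension) :
    Epi (sumToTotal F P G U) where
  left_cancellation u v huv := hom_ext_of_map_openStar_comp_eq hG fun p φ => by
    have hp := mem_of_openStar_le (leOfHom φ)
    rw [Subsingleton.elim φ (homOfLE (openStar_le P U hp)), ← ι_sumToTotal_comp ⟨p, hp⟩, huv,
      ι_sumToTotal_comp]

lemma map_comp_ι_comp_of_leftMap_comp_eq {T : ModuleCat F} {t : starSum F P G U ⟶ T}
    (ht : leftMap F P G U ≫ t = rightMap F P G U ≫ t)
    (p q : P) (hp : p ∈ U) (hq : q ∈ U) (φ : openStar P q ⟶ openStar P p) :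
    G.map φ ≫ biproduct.ι (fun r : starIdx P U => G.obj (openStar P r.1)) ⟨p, hp⟩ ≫ t =
      biproduct.ι (fun r : starIdx P U => G.obj (openStar P r.1)) ⟨q, hq⟩ ≫ t := by
  rw [Subsingleton.elim φ (homOfLE (leOfHom φ))]
  -- restrict the equation on the summand `(p, q)` along `U_q ⊆ U_p ∩ U_q`
  have hpair := congrArg (biproduct.ι (fun z : pairIdx P U =>
    G.obj (openStar P z.1.1 ⊓ openStar P z.1.2)) ⟨(p, q), hp, hq⟩ ≫ ·) ht
  simp only [leftMap, rightMap, biproduct.ι_desc_assoc, Category.assoc] at hpair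
  have hrestr := congrArg (G.map (homOfLE (le_inf (leOfHom φ) le_rfl)) ≫ ·) hpair
  simpa only [← G.map_comp_assoc, homOfLE_comp, homOfLE_refl, G.map_id,
    Category.id_comp] using hrestr

lemma exists_sumToTotal_comp_eq {C : Pᵒᵖ ⥤ ModuleCat F} {α : C ⟶ starFunctor P ⋙ G}
    (hG : (Functor.LeftExtension.mk G α).IsPointwiseLeftKanExtension)
    {T : ModuleCat F} {t : starSum F P G U ⟶ T}
    (ht : leftMap F P G U ≫ t = rightMap F P G U ≫ t) :
    ∃ u : G.obj U ⟶ T, sumToTotal F P G U ≫ u = t := by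
  let s : ∀ p ∈ U, G.obj (openStar P p) ⟶ T := fun p hp =>
    biproduct.ι (fun r : starIdx P U => G.obj (openStar P r.1)) ⟨p, hp⟩ ≫ t
  obtain ⟨u, hu⟩ := exists_map_openStar_comp_eq hG s (map_comp_ι_comp_of_leftMap_comp_eq ht)
  refine ⟨u, biproduct.hom_ext' _ _ fun p => ?_⟩
  rw [ι_sumToTotal_comp, hu]

end

theorem cosheaf_condition_for_star_cover
    (C : Pᵒᵖ ⥤ ModuleCat F)
    (α : C ⟶ starFunctor P ⋙ G)
    (hG : (CategoryTheory.Functor.LeftExtension.mk G α).IsPointwiseLeftKanExtension) :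
    leftMap F P G U ≫ sumToTotal F P G U = rightMap F P G U ≫ sumToTotal F P G U ∧
    ∀ (T : ModuleCat F) (t : starSum F P G U ⟶ T),
      leftMap F P G U ≫ t = rightMap F P G U ≫ t →
        ∃! u : G.obj U ⟶ T, sumToTotal F P G U ≫ u = t := by
  refine ⟨leftMap_comp_sumToTotal, fun T t ht => ?_⟩
  have := epi_sumToTotal U hG
  obtain ⟨u, hu⟩ := exists_sumToTotal_comp_eq hG ht
  exact ⟨u, hu, fun v hv => (cancel_epi _).1 (hv.trans hu.symm)⟩

end
end
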